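/- arXiv:2310.18886 — 3 statements merged into one kernel-verified Lean document; each statement's English description precedes it below -/
import Mathlib

section
/- Suppose X = U ∪ V with U, V path-connected open subsets, U ∩ V path-connected, b ∈ U ∩ V. For every group G and homomorphisms h_U : π₁(U,b) → G and h_V : π₁(V,b) → G agreeing on the images of π₁(U∩V,b) (i.e., h_U ∘ (incl_{U∩V,U})_* = h_V ∘ (incl_{U∩V,V})_*), there exists a unique homomorphism h : π₁(X,b) → G with h ∘ (incl_U)_* = h_U and h ∘ (incl_V)_* = h_V. Equivalently, π₁(X,b) is the pushout (amalgamated free product) of π₁(U,b) and π₁(V,b) over π₁(U∩V,b). -/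
open CategoryTheory in
/-- The homomorphism of fundamental groups induced by a continuous map. -/
noncomputable def pi1Map {X Y : Type} [TopologicalSpace X] [TopologicalSpace Y]
    (f : C(X, Y)) (x : X) :
    FundamentalGroup X x →* FundamentalGroup Y (f x) :=
  Functor.mapEnd ⟨x⟩ (FundamentalGroupoid.fundamentalGroupoidFunctor.map
    (X := TopCat.of X) (Y := TopCat.of Y) (TopCat.ofHom f))

/-- The continuous inclusion of a subset (as a subspace) into the ambient space. -/
def inclMap {X : Type} [TopologicalSpace X] (A : Set X) : C(↥A, X) :=
  ⟨Subtype.val, continuous_subtype_val⟩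

/-- The continuous inclusion between subspaces given by an inclusion of subsets. -/
def inclMap₂ {X : Type} [TopologicalSpace X] {A B : Set X} (h : A ⊆ B) : C(↥A, ↥B) :=
  ⟨Set.inclusion h, continuous_inclusion h⟩

namespace SVK

open CategoryTheory Set

attribute [local instance] Path.Homotopic.setoid

variable {X Y : Type} [TopologicalSpace X] [TopologicalSpace Y]

/-- The groupoid arrow associated to a path. -/
def Γ {x y : X} (p : Path x y) : FundamentalGroupoid.mk x ⟶ FundamentalGroupoid.mk y := ⟦p⟧

lemma Γ_trans {x y z : X} (p : Path x y) (q : Path y z) : Γ (p.trans q) = Γ p ≫ Γ q := by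
  rfl

lemma Γ_homotopic {x y : X} {p q : Path x y} (h : p.Homotopic q) : Γ p = Γ q :=
  Quotient.sound h

lemma Γ_refl (x : X) : Γ (Path.refl x) = 𝟙 (FundamentalGroupoid.mk x) := rfl

lemma Γ_trans_symm {x y : X} (p : Path x y) : Γ p ≫ Γ p.symm = 𝟙 _ := by
  rw [← Γ_trans, ← Γ_refl x]
  exact Γ_homotopic ⟨(Path.Homotopy.reflTransSymm p).symm⟩

lemma Γ_symm_trans {x y : X} (p : Path x y) : Γ p.symm ≫ Γ p = 𝟙 _ := by
  rw [← Γ_trans, ← Γ_refl y]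
  exact Γ_homotopic ⟨(Path.Homotopy.reflSymmTrans p).symm⟩

/-- The element of the fundamental group associated to a loop. -/
noncomputable def toElem {x : X} (p : Path x x) : FundamentalGroup X x :=
  Γ p

lemma toElem_hom {x : X} (p : Path x x) : (toElem p : FundamentalGroupoid.mk x ⟶ _) = Γ p := rfl

lemma toElem_eq {x : X} {p q : Path x x} (h : p.Homotopic q) : toElem p = toElem q :=
  Γ_homotopic h

lemma toElem_mul {x : X} (p q : Path x x) : toElem (p.trans q) = toElem q * toElem p :=
  Γ_trans p q

lemma toElem_refl (x : X) : toElem (Path.refl x) = 1 := Γ_refl x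

lemma toElem_symm {x : X} (p : Path x x) : toElem p.symm = (toElem p)⁻¹ := by
  have h : toElem p.symm * toElem p = 1 := by
    rw [← toElem_mul, ← toElem_refl x]
    exact toElem_eq ⟨(Path.Homotopy.reflTransSymm p).symm⟩
  exact eq_inv_of_mul_eq_one_left h

lemma exists_toElem {x : X} (e : FundamentalGroup X x) : ∃ p : Path x x, e = toElem p := by
  refine ⟨Quotient.out (s := Path.Homotopic.setoid x x) e, ?_⟩
  exact (Quotient.out_eq (s := Path.Homotopic.setoid x x) e).symm

lemma pi1Map_toElem (f : C(X, Y)) (x : X) (p : Path x x) :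
    pi1Map f x (toElem p) = toElem (p.map f.continuous) := by
  rfl

end SVK

namespace SVK

open CategoryTheory Set unitInterval

attribute [local instance] Path.Homotopic.setoid

variable {X Y Z : Type} [TopologicalSpace X] [TopologicalSpace Y] [TopologicalSpace Z]

/-! ### Interval halving -/

/-- `t ↦ t/2` on the unit interval. -/
noncomputable def κ₁ (t : I) : I := ⟨(t : ℝ) / 2, by constructor <;> [linarith [t.2.1]; linarith [t.2.2]]⟩

/-- `t ↦ (t+1)/2` on the unit interval. -/
noncomputable def κ₂ (t : I) : I := ⟨((t : ℝ) + 1) / 2, by constructor <;> [linarith [t.2.1]; linarith [t.2.2]]⟩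

lemma continuous_κ₁ : Continuous κ₁ := by
  apply Continuous.subtype_mk; fun_prop

lemma continuous_κ₂ : Continuous κ₂ := by
  apply Continuous.subtype_mk; fun_prop

@[simp] lemma κ₁_coe (t : I) : (κ₁ t : ℝ) = t / 2 := rfl
@[simp] lemma κ₂_coe (t : I) : (κ₂ t : ℝ) = (t + 1) / 2 := rfl

lemma κ₁_zero : κ₁ 0 = 0 := Subtype.ext (by norm_num [κ₁])
lemma κ₂_one : κ₂ 1 = 1 := Subtype.ext (by norm_num [κ₂])
lemma κ₂_zero_eq_κ₁_one : κ₂ 0 = κ₁ 1 := Subtype.ext (by norm_num [κ₁, κ₂])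

/-! ### Halves of paths -/

/-- First half of a path. -/
noncomputable def ph₁ {x y : X} (p : Path x y) : Path x (p (κ₁ 1)) where
  toFun t := p (κ₁ t)
  continuous_toFun := p.continuous.comp continuous_κ₁
  source' := by show p (κ₁ 0) = x; rw [κ₁_zero]; exact p.source
  target' := rfl

/-- Second half of a path. -/
noncomputable def ph₂ {x y : X} (p : Path x y) : Path (p (κ₁ 1)) y where
  toFun t := p (κ₂ t)
  continuous_toFun := p.continuous.comp continuous_κ₂
  source' := by show p (κ₂ 0) = p (κ₁ 1); rw [κ₂_zero_eq_κ₁_one]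
  target' := by show p (κ₂ 1) = y; rw [κ₂_one]; exact p.target

@[simp] lemma ph₁_apply {x y : X} (p : Path x y) (t : I) : ph₁ p t = p (κ₁ t) := rfl
@[simp] lemma ph₂_apply {x y : X} (p : Path x y) (t : I) : ph₂ p t = p (κ₂ t) := rfl

lemma ph₁_trans_ph₂ {x y : X} (p : Path x y) : (ph₁ p).trans (ph₂ p) = p := by
  ext t
  rw [Path.trans_apply]
  split_ifs with h
  · show p _ = p t
    congr 1
    exact Subtype.ext (by simp only [κ₁_coe]; ring)
  · show p _ = p t
    congr 1
    exact Subtype.ext (by simp only [κ₂_coe]; ring)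

lemma ph₁_range {x y : X} (p : Path x y) : range (ph₁ p) ⊆ range p := by
  rintro _ ⟨t, rfl⟩; exact ⟨κ₁ t, rfl⟩

lemma ph₂_range {x y : X} (p : Path x y) : range (ph₂ p) ⊆ range p := by
  rintro _ ⟨t, rfl⟩; exact ⟨κ₂ t, rfl⟩

lemma ph₁_of_trans {x y z : X} (p : Path x y) (q : Path y z) :
    ⇑(ph₁ (p.trans q)) = ⇑p := by
  funext t
  show (p.trans q) (κ₁ t) = p t
  rw [Path.trans_apply]
  split_ifs with h
  · congr 1; exact Subtype.ext (by simp only [κ₁_coe]; ring)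
  · exfalso; apply h; simp only [κ₁_coe]; linarith [t.2.2]

lemma ph₂_of_trans {x y z : X} (p : Path x y) (q : Path y z) :
    ⇑(ph₂ (p.trans q)) = ⇑q := by
  funext t
  show (p.trans q) (κ₂ t) = q t
  rw [Path.trans_apply]
  split_ifs with h
  · have ht : (t : ℝ) = 0 := by
      simp only [κ₂_coe] at h; linarith [t.2.1]
    have h0 : q t = y := by
      have h1 : t = 0 := Subtype.ext ht
      rw [h1, q.source]
    rw [h0]
    convert p.target using 2
    exact Subtype.ext (by simp only [κ₂_coe, ht]; norm_num)
  · congr 1; exact Subtype.ext (by simp only [κ₂_coe]; ring)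

/-! ### Corestriction of paths -/

/-- Corestriction of a path to a subset containing its image. -/
def cor {A : Set X} {x y : X} (p : Path x y) (h : ∀ t, p t ∈ A) :
    Path (⟨x, p.source ▸ h 0⟩ : A) (⟨y, p.target ▸ h 1⟩ : A) where
  toFun t := ⟨p t, h t⟩
  continuous_toFun := p.continuous.subtype_mk _
  source' := Subtype.ext p.source
  target' := Subtype.ext p.target

@[simp] lemma cor_apply {A : Set X} {x y : X} (p : Path x y) (h : ∀ t, p t ∈ A) (t : I) :
    cor p h t = ⟨p t, h t⟩ := rfl

lemma cor_trans {A : Set X} {x y z : X} (p : Path x y) (q : Path y z)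
    (hp : ∀ t, p t ∈ A) (hq : ∀ t, q t ∈ A) (hpq : ∀ t, (p.trans q) t ∈ A) :
    cor (p.trans q) hpq = (cor p hp).trans (cor q hq) := by
  ext t
  show ((p.trans q) t : X) = ((cor p hp).trans (cor q hq) t : X)
  simp only [Path.trans_apply]
  split_ifs <;> rfl

lemma cor_symm {A : Set X} {x y : X} (p : Path x y)
    (hp : ∀ t, p t ∈ A) (hps : ∀ t, p.symm t ∈ A) :
    cor p.symm hps = (cor p hp).symm := by
  ext t; rfl

lemma cor_refl {A : Set X} {x : X} (hx : ∀ t, (Path.refl x) t ∈ A) :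
    cor (Path.refl x) hx = Path.refl (⟨x, hx 0⟩ : A) := by
  ext t; rfl

lemma cor_map {A : Set X} {x y : X} (p : Path x y) (h : ∀ t, p t ∈ A) :
    (cor p h).map continuous_subtype_val = p := by
  ext t; rfl

end SVK

namespace SVK
lemma trans_mem_left {X : Type} [TopologicalSpace X] {W : Set X} {x y z : X}
    (p : Path x y) (q : Path y z) (h : ∀ t, (p.trans q) t ∈ W) : ∀ t, p t ∈ W := by
  intro t
  have h1 := congrFun (ph₁_of_trans p q) t
  simp only [ph₁_apply] at h1
  rw [← h1]
  exact h _

lemma trans_mem_right {X : Type} [TopologicalSpace X] {W : Set X} {x y z : X}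
    (p : Path x y) (q : Path y z) (h : ∀ t, (p.trans q) t ∈ W) : ∀ t, q t ∈ W := by
  intro t
  have h1 := congrFun (ph₂_of_trans p q) t
  simp only [ph₂_apply] at h1
  rw [← h1]
  exact h _

lemma symm_mem {X : Type} [TopologicalSpace X] {W : Set X} {x y : X}
    (p : Path x y) (h : ∀ t, p t ∈ W) : ∀ t, p.symm t ∈ W := fun t => h _

lemma trans_mem {X : Type} [TopologicalSpace X] {W : Set X} {x y z : X}
    (p : Path x y) (q : Path y z) (hp : ∀ t, p t ∈ W) (hq : ∀ t, q t ∈ W) :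
    ∀ t, (p.trans q) t ∈ W := by
  intro t
  rw [Path.trans_apply]
  split_ifs
  · exact hp _
  · exact hq _
end SVK

namespace SVK2

open CategoryTheory Set unitInterval SVK

variable {X Z : Type} [TopologicalSpace X] [TopologicalSpace Z]

/-! ### Squares and their edges -/

/-- Bottom edge path of a square. -/
def bot (Q : C(I × I, Z)) : Path (Q (0, 0)) (Q (1, 0)) where
  toFun t := Q (t, 0)
  continuous_toFun := Q.continuous.comp (by fun_prop)
  source' := rfl
  target' := rfl

/-- Top edge path of a square. -/
def top (Q : C(I × I, Z)) : Path (Q (0, 1)) (Q (1, 1)) where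
  toFun t := Q (t, 1)
  continuous_toFun := Q.continuous.comp (by fun_prop)
  source' := rfl
  target' := rfl

/-- Left edge path of a square. -/
def lft (Q : C(I × I, Z)) : Path (Q (0, 0)) (Q (0, 1)) where
  toFun s := Q (0, s)
  continuous_toFun := Q.continuous.comp (by fun_prop)
  source' := rfl
  target' := rfl

/-- Right edge path of a square. -/
def rgt (Q : C(I × I, Z)) : Path (Q (1, 0)) (Q (1, 1)) where
  toFun s := Q (1, s)
  continuous_toFun := Q.continuous.comp (by fun_prop)
  source' := rfl
  target' := rfl

instance : ContractibleSpace (I × I) := by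
  have hconv : Convex ℝ ((Icc (0:ℝ) 1) ×ˢ (Icc (0:ℝ) 1)) :=
    (convex_Icc (0:ℝ) 1).prod (convex_Icc (0:ℝ) 1)
  haveI : ContractibleSpace ↥((Icc (0:ℝ) 1) ×ˢ (Icc (0:ℝ) 1)) :=
    hconv.contractibleSpace ⟨(0, 0), by constructor <;> constructor <;> norm_num⟩
  exact (Homeomorph.Set.prod (Icc (0:ℝ) 1) (Icc (0:ℝ) 1)).symm.contractibleSpace

/-- In a square, bottom-then-right is homotopic to left-then-top. -/
lemma square_homotopic (Q : C(I × I, Z)) :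
    ((bot Q).trans (rgt Q)).Homotopic ((lft Q).trans (top Q)) := by
  have h1 : bot Q = (bot (ContinuousMap.id (I × I))).map Q.continuous := by ext t; rfl
  have h2 : rgt Q = (rgt (ContinuousMap.id (I × I))).map Q.continuous := by ext t; rfl
  have h3 : lft Q = (lft (ContinuousMap.id (I × I))).map Q.continuous := by ext t; rfl
  have h4 : top Q = (top (ContinuousMap.id (I × I))).map Q.continuous := by ext t; rfl
  have := Path.Homotopic.map (SimplyConnectedSpace.paths_homotopic
    ((bot (ContinuousMap.id (I × I))).trans (rgt (ContinuousMap.id (I × I))))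
    ((lft (ContinuousMap.id (I × I))).trans (top (ContinuousMap.id (I × I))))) Q
  rw [Path.map_trans, Path.map_trans] at this
  exact this

end SVK2

namespace SVK2

open CategoryTheory Set unitInterval SVK

variable {X Z : Type} [TopologicalSpace X] [TopologicalSpace Z]

/-- Left half of a square (horizontal direction). -/
noncomputable def SH₁ (Q : C(I × I, Z)) : C(I × I, Z) :=
  Q.comp ⟨fun z => (κ₁ z.1, z.2), ((continuous_κ₁.comp continuous_fst).prodMk continuous_snd)⟩

/-- Right half of a square (horizontal direction). -/
noncomputable def SH₂ (Q : C(I × I, Z)) : C(I × I, Z) :=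
  Q.comp ⟨fun z => (κ₂ z.1, z.2), ((continuous_κ₂.comp continuous_fst).prodMk continuous_snd)⟩

/-- Bottom half of a square (vertical direction). -/
noncomputable def SV₁ (Q : C(I × I, Z)) : C(I × I, Z) :=
  Q.comp ⟨fun z => (z.1, κ₁ z.2), (continuous_fst.prodMk (continuous_κ₁.comp continuous_snd))⟩

/-- Top half of a square (vertical direction). -/
noncomputable def SV₂ (Q : C(I × I, Z)) : C(I × I, Z) :=
  Q.comp ⟨fun z => (z.1, κ₂ z.2), (continuous_fst.prodMk (continuous_κ₂.comp continuous_snd))⟩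

lemma SH₁_range (Q : C(I × I, Z)) : range (SH₁ Q) ⊆ range Q := by
  rintro _ ⟨z, rfl⟩; exact ⟨_, rfl⟩

lemma SH₂_range (Q : C(I × I, Z)) : range (SH₂ Q) ⊆ range Q := by
  rintro _ ⟨z, rfl⟩; exact ⟨_, rfl⟩

lemma bot_range (Q : C(I × I, Z)) : range (bot Q) ⊆ range Q := by
  rintro _ ⟨t, rfl⟩; exact ⟨_, rfl⟩

lemma top_range (Q : C(I × I, Z)) : range (top Q) ⊆ range Q := by
  rintro _ ⟨t, rfl⟩; exact ⟨_, rfl⟩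

lemma lft_range (Q : C(I × I, Z)) : range (lft Q) ⊆ range Q := by
  rintro _ ⟨t, rfl⟩; exact ⟨_, rfl⟩

lemma rgt_range (Q : C(I × I, Z)) : range (rgt Q) ⊆ range Q := by
  rintro _ ⟨t, rfl⟩; exact ⟨_, rfl⟩

lemma bot_SH₁ (Q : C(I × I, Z)) : ⇑(bot (SH₁ Q)) = ⇑(ph₁ (bot Q)) := rfl
lemma bot_SH₂ (Q : C(I × I, Z)) : ⇑(bot (SH₂ Q)) = ⇑(ph₂ (bot Q)) := rfl
lemma top_SH₁ (Q : C(I × I, Z)) : ⇑(top (SH₁ Q)) = ⇑(ph₁ (top Q)) := rfl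
lemma top_SH₂ (Q : C(I × I, Z)) : ⇑(top (SH₂ Q)) = ⇑(ph₂ (top Q)) := rfl
lemma lft_SH₁ (Q : C(I × I, Z)) : ⇑(lft (SH₁ Q)) = ⇑(lft Q) := by
  funext s; show Q (κ₁ 0, s) = Q (0, s); rw [κ₁_zero]
lemma rgt_SH₂ (Q : C(I × I, Z)) : ⇑(rgt (SH₂ Q)) = ⇑(rgt Q) := by
  funext s; show Q (κ₂ 1, s) = Q (1, s); rw [κ₂_one]
lemma rgt_SH₁ (Q : C(I × I, Z)) : ⇑(rgt (SH₁ Q)) = ⇑(lft (SH₂ Q)) := by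
  funext s; show Q (κ₁ 1, s) = Q (κ₂ 0, s); rw [κ₂_zero_eq_κ₁_one]

lemma lft_SV₁ (Q : C(I × I, Z)) : ⇑(lft (SV₁ Q)) = ⇑(ph₁ (lft Q)) := rfl
lemma lft_SV₂ (Q : C(I × I, Z)) : ⇑(lft (SV₂ Q)) = ⇑(ph₂ (lft Q)) := rfl
lemma rgt_SV₁ (Q : C(I × I, Z)) : ⇑(rgt (SV₁ Q)) = ⇑(ph₁ (rgt Q)) := rfl
lemma rgt_SV₂ (Q : C(I × I, Z)) : ⇑(rgt (SV₂ Q)) = ⇑(ph₂ (rgt Q)) := rfl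
lemma bot_SV₁ (Q : C(I × I, Z)) : ⇑(bot (SV₁ Q)) = ⇑(bot Q) := by
  funext t; show Q (t, κ₁ 0) = Q (t, 0); rw [κ₁_zero]
lemma top_SV₂ (Q : C(I × I, Z)) : ⇑(top (SV₂ Q)) = ⇑(top Q) := by
  funext t; show Q (t, κ₂ 1) = Q (t, 1); rw [κ₂_one]
lemma top_SV₁ (Q : C(I × I, Z)) : ⇑(top (SV₁ Q)) = ⇑(bot (SV₂ Q)) := by
  funext t; show Q (t, κ₁ 1) = Q (t, κ₂ 0); rw [κ₂_zero_eq_κ₁_one]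

end SVK2

namespace SVK3

open CategoryTheory Set unitInterval SVK SVK2

attribute [local instance] Path.Homotopic.setoid

/-! ### Conjugated loop algebra -/

section conj

variable {Z : Type} [TopologicalSpace Z] {z₀ x y z : Z}

lemma Γ_symm_trans_assoc {x y : Z} (p : Path x y) {w : FundamentalGroupoid Z}
    (f : FundamentalGroupoid.mk y ⟶ w) : Γ p.symm ≫ Γ p ≫ f = f := by
  rw [← Category.assoc, Γ_symm_trans, Category.id_comp]

lemma toElem_conj_mul (cx : Path z₀ x) (cy : Path z₀ y) (cz : Path z₀ z)
    (p : Path x y) (q : Path y z) :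
    toElem (cx.trans ((p.trans q).trans cz.symm))
      = toElem (cy.trans (q.trans cz.symm)) * toElem (cx.trans (p.trans cy.symm)) := by
  show Γ _ = Γ (cx.trans (p.trans cy.symm)) ≫ Γ (cy.trans (q.trans cz.symm))
  simp only [Γ_trans, Category.assoc, Γ_symm_trans_assoc]

lemma toElem_conj_homotopic (cx : Path z₀ x) (cy : Path z₀ y) {p q : Path x y}
    (h : p.Homotopic q) :
    toElem (cx.trans (p.trans cy.symm)) = toElem (cx.trans (q.trans cy.symm)) :=
  toElem_eq ((Path.Homotopic.refl cx).hcomp (h.hcomp (Path.Homotopic.refl cy.symm)))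

lemma toElem_conj_refl (cx : Path z₀ x) :
    toElem (cx.trans ((Path.refl x).trans cx.symm)) = 1 := by
  show Γ _ = 𝟙 _
  simp only [Γ_trans, Γ_refl, Category.id_comp]
  exact Γ_trans_symm cx

lemma toElem_conj_symm (cx : Path z₀ x) (cy : Path z₀ y) (p : Path x y) :
    toElem (cy.trans (p.symm.trans cx.symm)) = (toElem (cx.trans (p.trans cy.symm)))⁻¹ := by
  apply eq_inv_of_mul_eq_one_right
  have h := toElem_conj_mul cy cx cy p.symm p
  rw [toElem_conj_homotopic cy cy (q := Path.refl y)
    ⟨(Path.Homotopy.reflSymmTrans p).symm⟩, toElem_conj_refl] at h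
  exact h.symm

end conj

/-! ### The setup bundle -/

/-- All the data and hypotheses of the Seifert–van Kampen theorem. -/
structure Setup where
  /-- the ambient space -/
  X : Type
  /-- topology -/
  tX : TopologicalSpace X
  /-- first open -/
  U : Set X
  /-- second open -/
  V : Set X
  hUo : IsOpen U
  hVo : IsOpen V
  hUc : IsPathConnected U
  hVc : IsPathConnected V
  hcover : U ∪ V = univ
  hUVc : IsPathConnected (U ∩ V)
  /-- basepoint -/
  b : X
  hb : b ∈ U ∩ V
  /-- target group -/
  G : Type
  grp : Group G
  /-- homomorphism on π₁ U -/
  hU : FundamentalGroup ↥U ⟨b, hb.1⟩ →* G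
  /-- homomorphism on π₁ V -/
  hV : FundamentalGroup ↥V ⟨b, hb.2⟩ →* G
  hcompat : hU.comp (pi1Map (inclMap₂ inter_subset_left) (⟨b, hb⟩ : ↥(U ∩ V)))
    = hV.comp (pi1Map (inclMap₂ inter_subset_right) (⟨b, hb⟩ : ↥(U ∩ V)))

attribute [instance] Setup.tX Setup.grp

namespace Setup

variable (S : Setup)

open scoped Classical in
/-- Chosen path from the basepoint to any point. -/
noncomputable def c (x : S.X) : Path S.b x :=
  if h : x = S.b then (Path.refl S.b).cast rfl h
  else if h2 : x ∈ S.U ∩ S.V then (S.hUVc.joinedIn S.b S.hb x h2).somePath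
  else if h3 : x ∈ S.U then (S.hUc.joinedIn S.b S.hb.1 x h3).somePath
  else if h4 : x ∈ S.V then (S.hVc.joinedIn S.b S.hb.2 x h4).somePath
  else (by
    have : x ∈ S.U ∪ S.V := S.hcover ▸ mem_univ x
    rcases this with h | h
    · exact absurd h h3
    · exact absurd h h4 : False).elim

lemma c_refl : S.c S.b = Path.refl S.b := by
  unfold c
  rw [dif_pos rfl]
  ext t
  rw [Path.cast_coe]

lemma c_mem_U {x : S.X} (hx : x ∈ S.U) (t : I) : S.c x t ∈ S.U := by
  unfold c
  split_ifs with h h2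
  · rw [congrFun (Path.cast_coe _ _ _) t, Path.refl_apply]
    exact S.hb.1
  · exact ((S.hUVc.joinedIn S.b S.hb x h2).somePath_mem t).1
  · exact (S.hUc.joinedIn S.b S.hb.1 x hx).somePath_mem t

lemma c_mem_V {x : S.X} (hx : x ∈ S.V) (t : I) : S.c x t ∈ S.V := by
  unfold c
  split_ifs with h h2 h3
  · rw [congrFun (Path.cast_coe _ _ _) t, Path.refl_apply]
    exact S.hb.2
  · exact ((S.hUVc.joinedIn S.b S.hb x h2).somePath_mem t).2
  · exact absurd ⟨h3, hx⟩ h2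
  · exact (S.hVc.joinedIn S.b S.hb.2 x hx).somePath_mem t

lemma c_mem_UV {x : S.X} (hx : x ∈ S.U ∩ S.V) (t : I) : S.c x t ∈ S.U ∩ S.V := by
  unfold c
  split_ifs with h
  · rw [congrFun (Path.cast_coe _ _ _) t, Path.refl_apply]
    exact S.hb
  · exact (S.hUVc.joinedIn S.b S.hb x hx).somePath_mem t

/-- Chosen path corestricted to U. -/
noncomputable def cU (a : ↥S.U) : Path (⟨S.b, S.hb.1⟩ : ↥S.U) a :=
  cor (S.c a.1) (S.c_mem_U a.2)

/-- Chosen path corestricted to V. -/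
noncomputable def cV (a : ↥S.V) : Path (⟨S.b, S.hb.2⟩ : ↥S.V) a :=
  cor (S.c a.1) (S.c_mem_V a.2)

/-- Chosen path corestricted to U ∩ V. -/
noncomputable def cUV (a : ↥(S.U ∩ S.V)) : Path (⟨S.b, S.hb⟩ : ↥(S.U ∩ S.V)) a :=
  cor (S.c a.1) (S.c_mem_UV a.2)

/-- The `G`-value of a path contained in `U`. -/
noncomputable def gU {x y : S.X} (p : Path x y) (hp : ∀ t, p t ∈ S.U) : S.G :=
  S.hU (toElem ((S.cU ⟨x, p.source ▸ hp 0⟩).trans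
    ((cor p hp).trans (S.cU ⟨y, p.target ▸ hp 1⟩).symm)))

/-- The `G`-value of a path contained in `V`. -/
noncomputable def gV {x y : S.X} (p : Path x y) (hp : ∀ t, p t ∈ S.V) : S.G :=
  S.hV (toElem ((S.cV ⟨x, p.source ▸ hp 0⟩).trans
    ((cor p hp).trans (S.cV ⟨y, p.target ▸ hp 1⟩).symm)))

lemma gU_trans {x y z : S.X} (p : Path x y) (q : Path y z)
    (hp : ∀ t, p t ∈ S.U) (hq : ∀ t, q t ∈ S.U) (hpq : ∀ t, (p.trans q) t ∈ S.U) :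
    S.gU (p.trans q) hpq = S.gU q hq * S.gU p hp := by
  unfold gU
  rw [cor_trans p q hp hq hpq,
    toElem_conj_mul (S.cU ⟨x, p.source ▸ hp 0⟩) (S.cU ⟨y, q.source ▸ hq 0⟩)
      (S.cU ⟨z, q.target ▸ hq 1⟩) (cor p hp) (cor q hq), map_mul]

lemma gU_homotopic {x y : S.X} (p q : Path x y) (hp : ∀ t, p t ∈ S.U)
    (hq : ∀ t, q t ∈ S.U) (h : (cor p hp).Homotopic (cor q hq)) :
    S.gU p hp = S.gU q hq := by
  unfold gU
  rw [toElem_conj_homotopic _ _ h]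

lemma gU_symm {x y : S.X} (p : Path x y) (hp : ∀ t, p t ∈ S.U)
    (hps : ∀ t, p.symm t ∈ S.U) :
    S.gU p.symm hps = (S.gU p hp)⁻¹ := by
  unfold gU
  rw [cor_symm p hp hps, toElem_conj_symm, map_inv]

lemma gU_refl {x : S.X} (hx : x ∈ S.U) :
    S.gU (Path.refl x) (fun _ => hx) = 1 := by
  show S.hU (toElem ((S.cU ⟨x, hx⟩).trans ((cor (Path.refl x) (fun _ => hx)).trans (S.cU ⟨x, hx⟩).symm))) = 1
  exact (congrArg (fun q => S.hU (toElem ((S.cU ⟨x, hx⟩).trans (q.trans (S.cU ⟨x, hx⟩).symm))))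
    (cor_refl (A := S.U) (fun _ => hx))).trans ((congrArg S.hU (toElem_conj_refl _)).trans (map_one _))

lemma gV_trans {x y z : S.X} (p : Path x y) (q : Path y z)
    (hp : ∀ t, p t ∈ S.V) (hq : ∀ t, q t ∈ S.V) (hpq : ∀ t, (p.trans q) t ∈ S.V) :
    S.gV (p.trans q) hpq = S.gV q hq * S.gV p hp := by
  unfold gV
  rw [cor_trans p q hp hq hpq,
    toElem_conj_mul (S.cV ⟨x, p.source ▸ hp 0⟩) (S.cV ⟨y, q.source ▸ hq 0⟩)
      (S.cV ⟨z, q.target ▸ hq 1⟩) (cor p hp) (cor q hq), map_mul]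

lemma gV_homotopic {x y : S.X} (p q : Path x y) (hp : ∀ t, p t ∈ S.V)
    (hq : ∀ t, q t ∈ S.V) (h : (cor p hp).Homotopic (cor q hq)) :
    S.gV p hp = S.gV q hq := by
  unfold gV
  rw [toElem_conj_homotopic _ _ h]

lemma gV_symm {x y : S.X} (p : Path x y) (hp : ∀ t, p t ∈ S.V)
    (hps : ∀ t, p.symm t ∈ S.V) :
    S.gV p.symm hps = (S.gV p hp)⁻¹ := by
  unfold gV
  rw [cor_symm p hp hps, toElem_conj_symm, map_inv]

lemma gV_refl {x : S.X} (hx : x ∈ S.V) :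
    S.gV (Path.refl x) (fun _ => hx) = 1 := by
  show S.hV (toElem ((S.cV ⟨x, hx⟩).trans ((cor (Path.refl x) (fun _ => hx)).trans (S.cV ⟨x, hx⟩).symm))) = 1
  exact (congrArg (fun q => S.hV (toElem ((S.cV ⟨x, hx⟩).trans (q.trans (S.cV ⟨x, hx⟩).symm))))
    (cor_refl (A := S.V) (fun _ => hx))).trans ((congrArg S.hV (toElem_conj_refl _)).trans (map_one _))

lemma gU_eq_gV {x y : S.X} (p : Path x y) (hp : ∀ t, p t ∈ S.U ∩ S.V) :
    S.gU p (fun t => (hp t).1) = S.gV p (fun t => (hp t).2) := by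
  have hx : x ∈ S.U ∩ S.V := p.source ▸ hp 0
  have hy : y ∈ S.U ∩ S.V := p.target ▸ hp 1
  set LUV : Path (⟨S.b, S.hb⟩ : ↥(S.U ∩ S.V)) (⟨S.b, S.hb⟩ : ↥(S.U ∩ S.V)) :=
    (S.cUV ⟨x, hx⟩).trans ((cor p hp).trans (S.cUV ⟨y, hy⟩).symm) with hLUV
  have hmapU : ((S.cU ⟨x, hx.1⟩).trans
      ((cor p (fun t => (hp t).1)).trans (S.cU ⟨y, hy.1⟩).symm))
      = LUV.map (inclMap₂ (inter_subset_left : S.U ∩ S.V ⊆ S.U)).continuous := by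
    ext t
    simp only [Path.map_coe, Function.comp_apply, Path.trans_apply, inclMap₂,
      ContinuousMap.coe_mk, Set.coe_inclusion, hLUV]
    show _ = ((LUV t : ↥(S.U ∩ S.V)) : S.X)
    simp only [hLUV, Path.trans_apply]
    split_ifs <;> rfl
  have hmapV : ((S.cV ⟨x, hx.2⟩).trans
      ((cor p (fun t => (hp t).2)).trans (S.cV ⟨y, hy.2⟩).symm))
      = LUV.map (inclMap₂ (inter_subset_right : S.U ∩ S.V ⊆ S.V)).continuous := by
    ext t
    simp only [Path.map_coe, Function.comp_apply, Path.trans_apply, inclMap₂,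
      ContinuousMap.coe_mk, Set.coe_inclusion, hLUV]
    show _ = ((LUV t : ↥(S.U ∩ S.V)) : S.X)
    simp only [hLUV, Path.trans_apply]
    split_ifs <;> rfl
  unfold gU gV
  rw [hmapU, hmapV]
  exact (congrArg S.hU (pi1Map_toElem (inclMap₂ (inter_subset_left : S.U ∩ S.V ⊆ S.U)) _ LUV).symm).trans
    ((DFunLike.congr_fun S.hcompat (toElem LUV)).trans
      (congrArg S.hV (pi1Map_toElem (inclMap₂ (inter_subset_right : S.U ∩ S.V ⊆ S.V)) _ LUV)))

open scoped Classical in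
/-- The `G`-value of a small path. -/
noncomputable def g {x y : S.X} (p : Path x y) : S.G :=
  if h : ∀ t, p t ∈ S.U then S.gU p h
  else if h2 : ∀ t, p t ∈ S.V then S.gV p h2
  else 1

lemma g_eq_gU {x y : S.X} (p : Path x y) (hp : ∀ t, p t ∈ S.U) : S.g p = S.gU p hp := by
  unfold g
  rw [dif_pos hp]

lemma g_eq_gV {x y : S.X} (p : Path x y) (hp : ∀ t, p t ∈ S.V) : S.g p = S.gV p hp := by
  unfold g
  by_cases h : ∀ t, p t ∈ S.U
  · rw [dif_pos h]
    exact S.gU_eq_gV p (fun t => ⟨h t, hp t⟩)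
  · rw [dif_neg h, dif_pos hp]

lemma g_trans {x y z : S.X} (p : Path x y) (q : Path y z)
    (h : (∀ t, (p.trans q) t ∈ S.U) ∨ (∀ t, (p.trans q) t ∈ S.V)) :
    S.g (p.trans q) = S.g q * S.g p := by
  rcases h with h | h
  · rw [S.g_eq_gU _ h, S.g_eq_gU _ (trans_mem_left p q h), S.g_eq_gU _ (trans_mem_right p q h),
      S.gU_trans p q _ _ h]
  · rw [S.g_eq_gV _ h, S.g_eq_gV _ (trans_mem_left p q h), S.g_eq_gV _ (trans_mem_right p q h),
      S.gV_trans p q _ _ h]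

lemma g_symm {x y : S.X} (p : Path x y)
    (h : (∀ t, p t ∈ S.U) ∨ (∀ t, p t ∈ S.V)) :
    S.g p.symm = (S.g p)⁻¹ := by
  rcases h with h | h
  · rw [S.g_eq_gU _ h, S.g_eq_gU _ (symm_mem p h), S.gU_symm p h]
  · rw [S.g_eq_gV _ h, S.g_eq_gV _ (symm_mem p h), S.gV_symm p h]

lemma g_refl (x : S.X) : S.g (Path.refl x) = 1 := by
  have hx : x ∈ S.U ∪ S.V := S.hcover ▸ mem_univ x
  rcases hx with hx | hx
  · rw [S.g_eq_gU _ (fun _ => hx), S.gU_refl hx]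
  · rw [S.g_eq_gV _ (fun _ => hx), S.gV_refl hx]

lemma g_congr {x y x' y' : S.X} (p : Path x y) (p' : Path x' y')
    (h : ∀ t, p t = p' t) : S.g p = S.g p' := by
  have hx : x = x' := by rw [← p.source, ← p'.source, h]
  have hy : y = y' := by rw [← p.target, ← p'.target, h]
  subst hx; subst hy
  have hpp : p = p' := by ext t; exact h t
  rw [hpp]

/-- The combinatorial value of a path at dyadic level `n`. -/
noncomputable def Φ : ∀ (_ : ℕ) {x y : S.X}, Path x y → S.G
  | 0, _, _, p => S.g p
  | (n+1), _, _, p => Φ n (ph₂ p) * Φ n (ph₁ p)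

/-- Dyadic fineness of a path with respect to the cover. -/
def fine : ∀ (_ : ℕ) {x y : S.X}, Path x y → Prop
  | 0, _, _, p => (∀ t, p t ∈ S.U) ∨ (∀ t, p t ∈ S.V)
  | (n+1), _, _, p => fine n (ph₁ p) ∧ fine n (ph₂ p)

lemma Φ_zero {x y : S.X} (p : Path x y) : S.Φ 0 p = S.g p := rfl

lemma Φ_succ (n : ℕ) {x y : S.X} (p : Path x y) :
    S.Φ (n+1) p = S.Φ n (ph₂ p) * S.Φ n (ph₁ p) := rfl

lemma fine_zero {x y : S.X} (p : Path x y) :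
    S.fine 0 p ↔ (∀ t, p t ∈ S.U) ∨ (∀ t, p t ∈ S.V) := Iff.rfl

lemma fine_succ (n : ℕ) {x y : S.X} (p : Path x y) :
    S.fine (n+1) p ↔ S.fine n (ph₁ p) ∧ S.fine n (ph₂ p) := Iff.rfl

lemma Φ_congr : ∀ (n : ℕ) {x y x' y' : S.X} (p : Path x y) (p' : Path x' y'),
    (∀ t, p t = p' t) → S.Φ n p = S.Φ n p'
  | 0, _, _, _, _, p, p', h => S.g_congr p p' h
  | (n+1), _, _, _, _, p, p', h => by
    rw [Φ_succ, Φ_succ, Φ_congr n (ph₂ p) (ph₂ p') (fun t => h (κ₂ t)),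
      Φ_congr n (ph₁ p) (ph₁ p') (fun t => h (κ₁ t))]

lemma fine_congr : ∀ (n : ℕ) {x y x' y' : S.X} (p : Path x y) (p' : Path x' y'),
    (∀ t, p t = p' t) → (S.fine n p ↔ S.fine n p')
  | 0, _, _, _, _, p, p', h => by
    constructor <;> rintro (hf | hf)
    · exact Or.inl (fun t => h t ▸ hf t)
    · exact Or.inr (fun t => h t ▸ hf t)
    · exact Or.inl (fun t => (h t).symm ▸ hf t)
    · exact Or.inr (fun t => (h t).symm ▸ hf t)
  | (n+1), _, _, _, _, p, p', h => by
    rw [fine_succ, fine_succ, fine_congr n (ph₁ p) (ph₁ p') (fun t => h (κ₁ t)),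
      fine_congr n (ph₂ p) (ph₂ p') (fun t => h (κ₂ t))]

lemma fine_mono : ∀ (n : ℕ) {x y : S.X} (p : Path x y), S.fine n p → S.fine (n+1) p
  | 0, _, _, p, h => by
    rw [fine_succ]
    rcases h with h | h
    · exact ⟨Or.inl (fun t => h _), Or.inl (fun t => h _)⟩
    · exact ⟨Or.inr (fun t => h _), Or.inr (fun t => h _)⟩
  | (n+1), _, _, p, h => by
    rw [fine_succ] at h
    exact ⟨fine_mono n _ h.1, fine_mono n _ h.2⟩

lemma fine_le {n m : ℕ} (hnm : n ≤ m) {x y : S.X} (p : Path x y) (h : S.fine n p) :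
    S.fine m p := by
  induction m with
  | zero => simpa [Nat.le_zero.mp hnm] using h
  | succ m ih =>
    rcases Nat.lt_or_ge n (m+1) with hlt | hge
    · exact S.fine_mono m p (ih (Nat.lt_succ_iff.mp hlt))
    · have : n = m + 1 := le_antisymm hnm hge
      subst this; exact h

lemma Φ_succ_of_fine : ∀ (n : ℕ) {x y : S.X} (p : Path x y),
    S.fine n p → S.Φ (n+1) p = S.Φ n p
  | 0, _, _, p, h => by
    rw [Φ_succ, Φ_zero, Φ_zero, Φ_zero]
    have h2 : S.g p = S.g (ph₂ p) * S.g (ph₁ p) := by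
      conv_lhs => rw [← ph₁_trans_ph₂ p]
      refine S.g_trans _ _ ?_
      rw [ph₁_trans_ph₂]
      exact h
    exact h2.symm
  | (n+1), _, _, p, h => by
    rw [fine_succ] at h
    rw [S.Φ_succ (n+1), Φ_succ_of_fine n _ h.2, Φ_succ_of_fine n _ h.1, S.Φ_succ n]

lemma Φ_stable {x y : S.X} (p : Path x y) {n m : ℕ} (hnm : n ≤ m) (h : S.fine n p) :
    S.Φ m p = S.Φ n p := by
  induction m with
  | zero => rw [Nat.le_zero.mp hnm]
  | succ m ih =>
    rcases Nat.lt_or_ge n (m+1) with hlt | hge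
    · have hm : n ≤ m := Nat.lt_succ_iff.mp hlt
      rw [S.Φ_succ_of_fine m p (S.fine_le hm p h), ih hm]
    · have : n = m + 1 := le_antisymm hnm hge
      subst this; rfl

section Strip

lemma strip_rel_U (Q : C(I × I, S.X)) (h : ∀ z, Q z ∈ S.U) :
    S.gU (rgt Q) (fun t => h _) * S.gU (bot Q) (fun t => h _)
      = S.gU (top Q) (fun t => h _) * S.gU (lft Q) (fun t => h _) := by
  let Qc : C(I × I, ↥S.U) := ⟨fun z => ⟨Q z, h z⟩, Q.continuous.subtype_mk _⟩
  have hhom := square_homotopic Qc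
  have e1 := toElem_conj_mul (S.cU (Qc (0,0))) (S.cU (Qc (1,0))) (S.cU (Qc (1,1)))
    (bot Qc) (rgt Qc)
  have e2 := toElem_conj_mul (S.cU (Qc (0,0))) (S.cU (Qc (0,1))) (S.cU (Qc (1,1)))
    (lft Qc) (top Qc)
  have e3 := toElem_conj_homotopic (S.cU (Qc (0,0))) (S.cU (Qc (1,1))) hhom
  rw [e1, e2] at e3
  unfold gU
  have hbot : cor (bot Q) (fun t => h ((t : I), (0 : I))) = bot Qc := by ext t; rfl
  have htop : cor (top Q) (fun t => h ((t : I), (1 : I))) = top Qc := by ext t; rfl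
  have hlft : cor (lft Q) (fun t => h ((0 : I), (t : I))) = lft Qc := by ext t; rfl
  have hrgt : cor (rgt Q) (fun t => h ((1 : I), (t : I))) = rgt Qc := by ext t; rfl
  rw [hbot, htop, hlft, hrgt, ← map_mul, ← map_mul]
  exact congrArg _ e3

lemma strip_rel_V (Q : C(I × I, S.X)) (h : ∀ z, Q z ∈ S.V) :
    S.gV (rgt Q) (fun t => h _) * S.gV (bot Q) (fun t => h _)
      = S.gV (top Q) (fun t => h _) * S.gV (lft Q) (fun t => h _) := by
  let Qc : C(I × I, ↥S.V) := ⟨fun z => ⟨Q z, h z⟩, Q.continuous.subtype_mk _⟩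
  have hhom := square_homotopic Qc
  have e1 := toElem_conj_mul (S.cV (Qc (0,0))) (S.cV (Qc (1,0))) (S.cV (Qc (1,1)))
    (bot Qc) (rgt Qc)
  have e2 := toElem_conj_mul (S.cV (Qc (0,0))) (S.cV (Qc (0,1))) (S.cV (Qc (1,1)))
    (lft Qc) (top Qc)
  have e3 := toElem_conj_homotopic (S.cV (Qc (0,0))) (S.cV (Qc (1,1))) hhom
  rw [e1, e2] at e3
  unfold gV
  have hbot : cor (bot Q) (fun t => h ((t : I), (0 : I))) = bot Qc := by ext t; rfl
  have htop : cor (top Q) (fun t => h ((t : I), (1 : I))) = top Qc := by ext t; rfl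
  have hlft : cor (lft Q) (fun t => h ((0 : I), (t : I))) = lft Qc := by ext t; rfl
  have hrgt : cor (rgt Q) (fun t => h ((1 : I), (t : I))) = rgt Qc := by ext t; rfl
  rw [hbot, htop, hlft, hrgt, ← map_mul, ← map_mul]
  exact congrArg _ e3

lemma strip_base (Q : C(I × I, S.X))
    (h : (∀ z, Q z ∈ S.U) ∨ (∀ z, Q z ∈ S.V)) :
    S.g (bot Q) = (S.g (rgt Q))⁻¹ * S.g (top Q) * S.g (lft Q) := by
  rcases h with h | h
  · rw [S.g_eq_gU (bot Q) (fun t => h _), S.g_eq_gU (top Q) (fun t => h _),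
      S.g_eq_gU (lft Q) (fun t => h _), S.g_eq_gU (rgt Q) (fun t => h _)]
    have := S.strip_rel_U Q h
    rw [mul_assoc]
    exact eq_inv_mul_of_mul_eq this
  · rw [S.g_eq_gV (bot Q) (fun t => h _), S.g_eq_gV (top Q) (fun t => h _),
      S.g_eq_gV (lft Q) (fun t => h _), S.g_eq_gV (rgt Q) (fun t => h _)]
    have := S.strip_rel_V Q h
    rw [mul_assoc]
    exact eq_inv_mul_of_mul_eq this

/-- Dyadic fineness of a horizontal strip. -/
def sfine : ∀ (_ : ℕ), C(I × I, S.X) → Prop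
  | 0, Q => (∀ z, Q z ∈ S.U) ∨ (∀ z, Q z ∈ S.V)
  | (n+1), Q => sfine n (SH₁ Q) ∧ sfine n (SH₂ Q)

/-- Dyadic fineness of a square. -/
def sqfine (n : ℕ) : ∀ (_ : ℕ), C(I × I, S.X) → Prop
  | 0, Q => S.sfine n Q
  | (m+1), Q => sqfine n m (SV₁ Q) ∧ sqfine n m (SV₂ Q)

lemma sfine_bot : ∀ (n : ℕ) (Q : C(I × I, S.X)), S.sfine n Q → S.fine n (bot Q)
  | 0, Q, h => h.imp (fun h t => h _) (fun h t => h _)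
  | (n+1), Q, h => by
    refine ⟨?_, ?_⟩
    · exact (S.fine_congr n _ _ (fun t => congrFun (bot_SH₁ Q) t)).mp (sfine_bot n _ h.1)
    · exact (S.fine_congr n _ _ (fun t => congrFun (bot_SH₂ Q) t)).mp (sfine_bot n _ h.2)

lemma sfine_top : ∀ (n : ℕ) (Q : C(I × I, S.X)), S.sfine n Q → S.fine n (top Q)
  | 0, Q, h => h.imp (fun h t => h _) (fun h t => h _)
  | (n+1), Q, h => by
    refine ⟨?_, ?_⟩
    · exact (S.fine_congr n _ _ (fun t => congrFun (top_SH₁ Q) t)).mp (sfine_top n _ h.1)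
    · exact (S.fine_congr n _ _ (fun t => congrFun (top_SH₂ Q) t)).mp (sfine_top n _ h.2)

lemma sqfine_bot {n : ℕ} : ∀ (m : ℕ) (Q : C(I × I, S.X)), S.sqfine n m Q → S.fine n (bot Q)
  | 0, Q, h => S.sfine_bot n Q h
  | (m+1), Q, h => by
    have := sqfine_bot m (SV₁ Q) h.1
    exact (S.fine_congr n _ _ (fun t => congrFun (bot_SV₁ Q) t)).mp this

lemma sqfine_top {n : ℕ} : ∀ (m : ℕ) (Q : C(I × I, S.X)), S.sqfine n m Q → S.fine n (top Q)
  | 0, Q, h => S.sfine_top n Q h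
  | (m+1), Q, h => by
    have := sqfine_top m (SV₂ Q) h.2
    exact (S.fine_congr n _ _ (fun t => congrFun (top_SV₂ Q) t)).mp this

lemma strip_claim : ∀ (n : ℕ) (Q : C(I × I, S.X)), S.sfine n Q →
    S.Φ n (bot Q) = (S.g (rgt Q))⁻¹ * S.Φ n (top Q) * S.g (lft Q)
  | 0, Q, h => by
    rw [S.Φ_zero, S.Φ_zero]
    exact S.strip_base Q h
  | (n+1), Q, h => by
    rw [S.Φ_succ, S.Φ_succ]
    have h1 := strip_claim n (SH₁ Q) h.1
    have h2 := strip_claim n (SH₂ Q) h.2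
    have e1 : S.Φ n (ph₁ (bot Q)) = S.Φ n (bot (SH₁ Q)) :=
      S.Φ_congr n _ _ (fun t => (congrFun (bot_SH₁ Q) t).symm)
    have e2 : S.Φ n (ph₂ (bot Q)) = S.Φ n (bot (SH₂ Q)) :=
      S.Φ_congr n _ _ (fun t => (congrFun (bot_SH₂ Q) t).symm)
    have e3 : S.Φ n (top (SH₁ Q)) = S.Φ n (ph₁ (top Q)) :=
      S.Φ_congr n _ _ (fun t => congrFun (top_SH₁ Q) t)
    have e4 : S.Φ n (top (SH₂ Q)) = S.Φ n (ph₂ (top Q)) :=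
      S.Φ_congr n _ _ (fun t => congrFun (top_SH₂ Q) t)
    have e5 : S.g (lft (SH₁ Q)) = S.g (lft Q) :=
      S.g_congr _ _ (fun t => congrFun (lft_SH₁ Q) t)
    have e6 : S.g (rgt (SH₂ Q)) = S.g (rgt Q) :=
      S.g_congr _ _ (fun t => congrFun (rgt_SH₂ Q) t)
    have e7 : S.g (rgt (SH₁ Q)) = S.g (lft (SH₂ Q)) :=
      S.g_congr _ _ (fun t => congrFun (rgt_SH₁ Q) t)
    rw [e1, e2, h1, h2, e3, e4, e5, e6, ← e7]
    group

lemma square_claim {n : ℕ} : ∀ (m : ℕ) (Q : C(I × I, S.X)), S.sqfine n m Q →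
    (∀ s : I, Q (0, s) = Q (0, 0)) → (∀ s : I, Q (1, s) = Q (1, 0)) →
    S.Φ n (bot Q) = S.Φ n (top Q)
  | 0, Q, h, hl, hr => by
    have := S.strip_claim n Q h
    have el : S.g (lft Q) = 1 := by
      have : S.g (lft Q) = S.g (Path.refl (Q (0, 0))) :=
        S.g_congr _ _ (fun t => by simp only [Path.refl_apply]; exact hl t)
      rw [this, S.g_refl]
    have er : S.g (rgt Q) = 1 := by
      have : S.g (rgt Q) = S.g (Path.refl (Q (1, 0))) :=
        S.g_congr _ _ (fun t => by simp only [Path.refl_apply]; exact hr t)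
      rw [this, S.g_refl]
    rw [el, er] at this
    simpa using this
  | (m+1), Q, h, hl, hr => by
    have hl1 : ∀ s : I, SV₁ Q (0, s) = SV₁ Q (0, 0) := fun s => by
      show Q (0, κ₁ s) = Q (0, κ₁ 0)
      rw [hl (κ₁ s), hl (κ₁ 0)]
    have hr1 : ∀ s : I, SV₁ Q (1, s) = SV₁ Q (1, 0) := fun s => by
      show Q (1, κ₁ s) = Q (1, κ₁ 0)
      rw [hr (κ₁ s), hr (κ₁ 0)]
    have hl2 : ∀ s : I, SV₂ Q (0, s) = SV₂ Q (0, 0) := fun s => by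
      show Q (0, κ₂ s) = Q (0, κ₂ 0)
      rw [hl (κ₂ s), hl (κ₂ 0)]
    have hr2 : ∀ s : I, SV₂ Q (1, s) = SV₂ Q (1, 0) := fun s => by
      show Q (1, κ₂ s) = Q (1, κ₂ 0)
      rw [hr (κ₂ s), hr (κ₂ 0)]
    have k1 := square_claim m (SV₁ Q) h.1 hl1 hr1
    have k2 := square_claim m (SV₂ Q) h.2 hl2 hr2
    calc S.Φ n (bot Q) = S.Φ n (bot (SV₁ Q)) :=
          S.Φ_congr n _ _ (fun t => (congrFun (bot_SV₁ Q) t).symm)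
      _ = S.Φ n (top (SV₁ Q)) := k1
      _ = S.Φ n (bot (SV₂ Q)) :=
          S.Φ_congr n _ _ (fun t => congrFun (top_SV₁ Q) t)
      _ = S.Φ n (top (SV₂ Q)) := k2
      _ = S.Φ n (top Q) := S.Φ_congr n _ _ (fun t => congrFun (top_SV₂ Q) t)

end Strip

section Lebesgue

/-- All dyadic rectangles at level `(n, m)` are mapped into `U` or into `V`. -/
def rectCond (n m : ℕ) (Q : C(I × I, S.X)) : Prop :=
  ∀ i j : ℕ, i < 2^n → j < 2^m →
    (∀ z : I × I, (z.1 : ℝ) ∈ Icc ((i : ℝ)/2^n) ((i+1)/2^n) →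
        (z.2 : ℝ) ∈ Icc ((j : ℝ)/2^m) ((j+1)/2^m) → Q z ∈ S.U) ∨
    (∀ z : I × I, (z.1 : ℝ) ∈ Icc ((i : ℝ)/2^n) ((i+1)/2^n) →
        (z.2 : ℝ) ∈ Icc ((j : ℝ)/2^m) ((j+1)/2^m) → Q z ∈ S.V)

lemma rectCond_SH₁ {n m : ℕ} {Q : C(I × I, S.X)} (h : S.rectCond (n+1) m Q) :
    S.rectCond n m (SH₁ Q) := by
  intro i j hi hj
  have hi' : i < 2^(n+1) := lt_of_lt_of_le hi (Nat.pow_le_pow_right (by norm_num) (Nat.le_succ n))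
  refine (h i j hi' hj).imp ?_ ?_ <;>
  · intro hh z hz1 hz2
    refine hh (κ₁ z.1, z.2) ⟨?_, ?_⟩ hz2
    · have h1 := hz1.1
      show ((i:ℝ))/2^(n+1) ≤ (z.1 : ℝ)/2
      rw [pow_succ, ← div_div]
      linarith
    · have h2 := hz1.2
      show (z.1 : ℝ)/2 ≤ ((i:ℝ)+1)/2^(n+1)
      rw [pow_succ, ← div_div]
      linarith

lemma rectCond_SH₂ {n m : ℕ} {Q : C(I × I, S.X)} (h : S.rectCond (n+1) m Q) :
    S.rectCond n m (SH₂ Q) := by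
  intro i j hi hj
  have hi' : i + 2^n < 2^(n+1) := by rw [pow_succ]; omega
  have h2n : (0:ℝ) < 2^n := by positivity
  refine (h (i + 2^n) j hi' hj).imp ?_ ?_ <;>
  · intro hh z hz1 hz2
    refine hh (κ₂ z.1, z.2) ⟨?_, ?_⟩ hz2
    · have h1 := hz1.1
      show ((i + 2^n : ℕ) : ℝ)/2^(n+1) ≤ ((z.1 : ℝ) + 1)/2
      have e : ((i + 2^n : ℕ) : ℝ)/2^(n+1) = (i:ℝ)/2^n/2 + 1/2 := by
        push_cast
        rw [pow_succ]
        field_simp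
      rw [e]
      linarith
    · have h2 := hz1.2
      show ((z.1 : ℝ) + 1)/2 ≤ (((i + 2^n : ℕ) : ℝ) + 1)/2^(n+1)
      have e : (((i + 2^n : ℕ) : ℝ) + 1)/2^(n+1) = ((i:ℝ)+1)/2^n/2 + 1/2 := by
        push_cast
        rw [pow_succ]
        field_simp
        ring
      rw [e]
      linarith

lemma rectCond_SV₁ {n m : ℕ} {Q : C(I × I, S.X)} (h : S.rectCond n (m+1) Q) :
    S.rectCond n m (SV₁ Q) := by
  intro i j hi hj
  have hj' : j < 2^(m+1) := lt_of_lt_of_le hj (Nat.pow_le_pow_right (by norm_num) (Nat.le_succ m))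
  refine (h i j hi hj').imp ?_ ?_ <;>
  · intro hh z hz1 hz2
    refine hh (z.1, κ₁ z.2) hz1 ⟨?_, ?_⟩
    · have h1 := hz2.1
      show ((j:ℝ))/2^(m+1) ≤ (z.2 : ℝ)/2
      rw [pow_succ, ← div_div]
      linarith
    · have h2 := hz2.2
      show (z.2 : ℝ)/2 ≤ ((j:ℝ)+1)/2^(m+1)
      rw [pow_succ, ← div_div]
      linarith

lemma rectCond_SV₂ {n m : ℕ} {Q : C(I × I, S.X)} (h : S.rectCond n (m+1) Q) :
    S.rectCond n m (SV₂ Q) := by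
  intro i j hi hj
  have hj' : j + 2^m < 2^(m+1) := by rw [pow_succ]; omega
  have h2m : (0:ℝ) < 2^m := by positivity
  refine (h i (j + 2^m) hi hj').imp ?_ ?_ <;>
  · intro hh z hz1 hz2
    refine hh (z.1, κ₂ z.2) hz1 ⟨?_, ?_⟩
    · have h1 := hz2.1
      show ((j + 2^m : ℕ) : ℝ)/2^(m+1) ≤ ((z.2 : ℝ) + 1)/2
      have e : ((j + 2^m : ℕ) : ℝ)/2^(m+1) = (j:ℝ)/2^m/2 + 1/2 := by
        push_cast
        rw [pow_succ]
        field_simp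
      rw [e]
      linarith
    · have h2 := hz2.2
      show ((z.2 : ℝ) + 1)/2 ≤ (((j + 2^m : ℕ) : ℝ) + 1)/2^(m+1)
      have e : (((j + 2^m : ℕ) : ℝ) + 1)/2^(m+1) = ((j:ℝ)+1)/2^m/2 + 1/2 := by
        push_cast
        rw [pow_succ]
        field_simp
        ring
      rw [e]
      linarith

lemma rectCond_sfine : ∀ (n : ℕ) (Q : C(I × I, S.X)), S.rectCond n 0 Q → S.sfine n Q
  | 0, Q, h => by
    refine (h 0 0 (by norm_num) (by norm_num)).imp ?_ ?_ <;>
    · intro hh z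
      refine hh z ⟨?_, ?_⟩ ⟨?_, ?_⟩
      · simpa using z.1.2.1
      · simpa using z.1.2.2
      · simpa using z.2.2.1
      · simpa using z.2.2.2
  | (n+1), Q, h => ⟨rectCond_sfine n _ (S.rectCond_SH₁ h), rectCond_sfine n _ (S.rectCond_SH₂ h)⟩

lemma rectCond_sqfine {n : ℕ} : ∀ (m : ℕ) (Q : C(I × I, S.X)),
    S.rectCond n m Q → S.sqfine n m Q
  | 0, Q, h => S.rectCond_sfine n Q h
  | (m+1), Q, h => ⟨rectCond_sqfine m _ (S.rectCond_SV₁ h), rectCond_sqfine m _ (S.rectCond_SV₂ h)⟩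

lemma exists_rectCond (Q : C(I × I, S.X)) : ∃ n, S.rectCond n n Q := by
  classical
  set cov : Bool → Set (I × I) := fun bb => if bb then Q ⁻¹' S.U else Q ⁻¹' S.V with hcov
  have hopen : ∀ bb, IsOpen (cov bb) := by
    intro bb
    cases bb <;> simp only [hcov, if_true, if_false]
    · exact S.hVo.preimage Q.continuous
    · exact S.hUo.preimage Q.continuous
  have hsub : (univ : Set (I × I)) ⊆ ⋃ bb, cov bb := by
    intro z _
    have : Q z ∈ S.U ∪ S.V := S.hcover ▸ mem_univ _
    rcases this with h | h
    · exact mem_iUnion.mpr ⟨true, by simpa [hcov] using h⟩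
    · exact mem_iUnion.mpr ⟨false, by simpa [hcov] using h⟩
  obtain ⟨δ, hδ, hball⟩ := lebesgue_number_lemma_of_metric isCompact_univ hopen hsub
  obtain ⟨n, hn⟩ := exists_pow_lt_of_lt_one hδ (by norm_num : (1/2 : ℝ) < 1)
  have hhalf : (1/2 : ℝ)^n = 1/2^n := by
    rw [div_pow, one_pow]
  refine ⟨n, ?_⟩
  intro i j hi hj
  have h2n : (0:ℝ) < 2^n := by positivity
  have hiR : (i : ℝ) + 1 ≤ 2^n := by exact_mod_cast Nat.succ_le_of_lt hi
  have hjR : (j : ℝ) + 1 ≤ 2^n := by exact_mod_cast Nat.succ_le_of_lt hj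
  set x₀ : I := ⟨((i : ℝ) + 1/2)/2^n, by
    constructor
    · positivity
    · rw [div_le_one h2n]; linarith⟩ with hx₀
  set y₀ : I := ⟨((j : ℝ) + 1/2)/2^n, by
    constructor
    · positivity
    · rw [div_le_one h2n]; linarith⟩ with hy₀
  obtain ⟨bb, hbb⟩ := hball (x₀, y₀) (mem_univ _)
  have key : ∀ z : I × I, (z.1 : ℝ) ∈ Icc ((i : ℝ)/2^n) ((i+1)/2^n) →
      (z.2 : ℝ) ∈ Icc ((j : ℝ)/2^n) ((j+1)/2^n) → z ∈ cov bb := by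
    intro z hz1 hz2
    apply hbb
    rw [Metric.mem_ball, Prod.dist_eq]
    have harith : (1:ℝ)/2/2^n + 1/2/2^n = 1/2^n := by ring
    have hd1 : dist z.1 x₀ < δ := by
      rw [Subtype.dist_eq, Real.dist_eq]
      have e0 : ((x₀ : I) : ℝ) = ((i : ℝ) + 1/2)/2^n := rfl
      have e1 : ((i : ℝ) + 1/2)/2^n = (i:ℝ)/2^n + 1/2/2^n := by rw [add_div]
      have e2 : ((i : ℝ) + 1)/2^n = (i:ℝ)/2^n + 1/2^n := by rw [add_div]
      have h1 := hz1.1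
      have h2 := hz1.2
      rw [e2] at h2
      have : |(z.1 : ℝ) - ((x₀ : I) : ℝ)| ≤ 1/2/2^n := by
        rw [e0, e1, abs_le]
        constructor <;> linarith
      calc |(z.1 : ℝ) - ((x₀ : I) : ℝ)| ≤ 1/2/2^n := this
        _ < 1/2^n := by
          rw [div_div]
          apply div_lt_div_of_pos_left one_pos (by positivity)
          linarith
        _ = (1/2 : ℝ)^n := hhalf.symm
        _ < δ := hn
    have hd2 : dist z.2 y₀ < δ := by
      rw [Subtype.dist_eq, Real.dist_eq]
      have e0 : ((y₀ : I) : ℝ) = ((j : ℝ) + 1/2)/2^n := rfl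
      have e1 : ((j : ℝ) + 1/2)/2^n = (j:ℝ)/2^n + 1/2/2^n := by rw [add_div]
      have e2 : ((j : ℝ) + 1)/2^n = (j:ℝ)/2^n + 1/2^n := by rw [add_div]
      have h1 := hz2.1
      have h2 := hz2.2
      rw [e2] at h2
      have : |(z.2 : ℝ) - ((y₀ : I) : ℝ)| ≤ 1/2/2^n := by
        rw [e0, e1, abs_le]
        constructor <;> linarith
      calc |(z.2 : ℝ) - ((y₀ : I) : ℝ)| ≤ 1/2/2^n := this
        _ < 1/2^n := by
          rw [div_div]
          apply div_lt_div_of_pos_left one_pos (by positivity)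
          linarith
        _ = (1/2 : ℝ)^n := hhalf.symm
        _ < δ := hn
    exact max_lt hd1 hd2
  cases bb
  · right
    intro z hz1 hz2
    have := key z hz1 hz2
    simpa [hcov] using this
  · left
    intro z hz1 hz2
    have := key z hz1 hz2
    simpa [hcov] using this

/-- Every path admits a fine dyadic level. -/
lemma exists_fine {x y : S.X} (p : Path x y) : ∃ n, S.fine n p := by
  set Q : C(I × I, S.X) := ⟨fun z => p z.1, p.continuous.comp continuous_fst⟩ with hQ
  obtain ⟨n, hn⟩ := S.exists_rectCond Q
  refine ⟨n, ?_⟩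
  have hsq := S.rectCond_sqfine n Q hn
  have hfb := S.sqfine_bot n Q hsq
  exact (S.fine_congr n (bot Q) p (fun t => rfl)).mp hfb

end Lebesgue



section Assembly

/-- The stable value of a path. -/
noncomputable def val {x y : S.X} (p : Path x y) : S.G :=
  S.Φ (S.exists_fine p).choose p

lemma val_eq {x y : S.X} (p : Path x y) {n : ℕ} (h : S.fine n p) : S.val p = S.Φ n p := by
  unfold val
  have hkf : S.fine (S.exists_fine p).choose p := (S.exists_fine p).choose_spec
  rcases le_total (S.exists_fine p).choose n with hle | hle
  · exact (S.Φ_stable p hle hkf).symm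
  · exact S.Φ_stable p hle h

lemma val_refl (x : S.X) : S.val (Path.refl x) = 1 := by
  have hx : x ∈ S.U ∪ S.V := S.hcover ▸ mem_univ x
  have hf : S.fine 0 (Path.refl x) := by
    rcases hx with hx | hx
    · exact Or.inl (fun _ => hx)
    · exact Or.inr (fun _ => hx)
  rw [S.val_eq _ hf, S.Φ_zero, S.g_refl]

lemma val_trans {x y z : S.X} (p : Path x y) (q : Path y z) :
    S.val (p.trans q) = S.val q * S.val p := by
  obtain ⟨n, hp⟩ := S.exists_fine p
  obtain ⟨m, hq⟩ := S.exists_fine q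
  have hpk : S.fine (max n m) p := S.fine_le (le_max_left n m) p hp
  have hqk : S.fine (max n m) q := S.fine_le (le_max_right n m) q hq
  have hf : S.fine (max n m + 1) (p.trans q) := by
    rw [S.fine_succ]
    constructor
    · exact (S.fine_congr _ p (ph₁ (p.trans q))
        (fun t => (congrFun (ph₁_of_trans p q) t).symm)).mp hpk
    · exact (S.fine_congr _ q (ph₂ (p.trans q))
        (fun t => (congrFun (ph₂_of_trans p q) t).symm)).mp hqk
  rw [S.val_eq (p.trans q) hf, S.Φ_succ, S.val_eq p hpk, S.val_eq q hqk,
    S.Φ_congr _ (ph₂ (p.trans q)) q (fun t => congrFun (ph₂_of_trans p q) t),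
    S.Φ_congr _ (ph₁ (p.trans q)) p (fun t => congrFun (ph₁_of_trans p q) t)]

lemma val_homotopic {x y : S.X} (p q : Path x y) (h : p.Homotopic q) :
    S.val p = S.val q := by
  obtain ⟨F⟩ := h
  set Q : C(I × I, S.X) := ⟨fun z => F (z.2, z.1),
    F.continuous.comp (continuous_snd.prodMk continuous_fst)⟩ with hQ
  obtain ⟨n, hn⟩ := S.exists_rectCond Q
  have hsq := S.rectCond_sqfine n Q hn
  have hbot : ∀ t : I, bot Q t = p t := fun t => F.apply_zero t
  have htop : ∀ t : I, top Q t = q t := fun t => F.apply_one t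
  have hl : ∀ s : I, Q (0, s) = Q (0, 0) := by
    intro s
    show F (s, 0) = F (0, 0)
    rw [F.source, F.source]
  have hr : ∀ s : I, Q (1, s) = Q (1, 0) := by
    intro s
    show F (s, 1) = F (0, 1)
    rw [F.target, F.target]
  have hfp : S.fine n p := (S.fine_congr n (bot Q) p hbot).mp (S.sqfine_bot n Q hsq)
  have hfq : S.fine n q := (S.fine_congr n (top Q) q htop).mp (S.sqfine_top n Q hsq)
  rw [S.val_eq p hfp, S.val_eq q hfq, ← S.Φ_congr n (bot Q) p hbot,
    ← S.Φ_congr n (top Q) q htop]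
  exact S.square_claim n Q hsq hl hr

/-- The underlying function of the induced homomorphism. -/
noncomputable def hFun (e : FundamentalGroup S.X S.b) : S.G :=
  S.val (Quotient.out (e : Path.Homotopic.Quotient S.b S.b))

lemma hFun_toElem (p : Path S.b S.b) : S.hFun (toElem p) = S.val p := by
  unfold hFun
  apply S.val_homotopic
  apply Quotient.exact (s := Path.Homotopic.setoid S.b S.b)
  exact Quotient.out_eq (s := Path.Homotopic.setoid S.b S.b) (toElem p)

/-- The induced homomorphism on the fundamental group of `X`. -/
noncomputable def bigHom : FundamentalGroup S.X S.b →* S.G where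
  toFun := S.hFun
  map_one' := by
    have h1 : (1 : FundamentalGroup S.X S.b) = toElem (Path.refl S.b) :=
      (toElem_refl S.b).symm
    rw [h1, S.hFun_toElem, S.val_refl]
  map_mul' := by
    intro e₁ e₂
    obtain ⟨p₁, rfl⟩ := exists_toElem e₁
    obtain ⟨p₂, rfl⟩ := exists_toElem e₂
    show S.hFun (toElem p₁ * toElem p₂) = S.hFun (toElem p₁) * S.hFun (toElem p₂)
    rw [← toElem_mul, S.hFun_toElem, S.hFun_toElem, S.hFun_toElem, S.val_trans]

lemma bigHom_toElem (p : Path S.b S.b) : S.bigHom (toElem p) = S.val p :=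
  S.hFun_toElem p

lemma bigHom_comp_U :
    S.bigHom.comp (pi1Map (inclMap S.U) (⟨S.b, S.hb.1⟩ : ↥S.U)) = S.hU := by
  apply MonoidHom.ext
  intro e
  obtain ⟨ℓ, rfl⟩ := exists_toElem e
  have h2 : (pi1Map (inclMap S.U) (⟨S.b, S.hb.1⟩ : ↥S.U)) (toElem ℓ)
      = toElem (ℓ.map (inclMap S.U).continuous) := pi1Map_toElem _ _ _
  change S.bigHom ((pi1Map (inclMap S.U) (⟨S.b, S.hb.1⟩ : ↥S.U)) (toElem ℓ)) = _
  refine ((congrArg S.bigHom h2).trans (S.bigHom_toElem _)).trans ?_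
  set p : Path S.b S.b := ℓ.map (inclMap S.U).continuous with hp'
  have hp : ∀ t, p t ∈ S.U := fun t => (ℓ t).2
  have hf : S.fine 0 p := Or.inl hp
  rw [S.val_eq p hf, S.Φ_zero, S.g_eq_gU p hp]
  unfold gU
  have hcb : S.cU ⟨S.b, S.hb.1⟩ = Path.refl (⟨S.b, S.hb.1⟩ : ↥S.U) := by
    ext t
    show (S.c S.b) t = S.b
    rw [S.c_refl]
    rfl
  have hcor : cor p hp = ℓ := by ext t; rfl
  rw [hcb, hcor]
  congr 1
  apply toElem_eq
  rw [Path.refl_symm]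
  exact (Path.Homotopic.trans ⟨Path.Homotopy.reflTrans _⟩ ⟨Path.Homotopy.transRefl ℓ⟩)

lemma bigHom_comp_V :
    S.bigHom.comp (pi1Map (inclMap S.V) (⟨S.b, S.hb.2⟩ : ↥S.V)) = S.hV := by
  apply MonoidHom.ext
  intro e
  obtain ⟨ℓ, rfl⟩ := exists_toElem e
  have h2 : (pi1Map (inclMap S.V) (⟨S.b, S.hb.2⟩ : ↥S.V)) (toElem ℓ)
      = toElem (ℓ.map (inclMap S.V).continuous) := pi1Map_toElem _ _ _
  change S.bigHom ((pi1Map (inclMap S.V) (⟨S.b, S.hb.2⟩ : ↥S.V)) (toElem ℓ)) = _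
  refine ((congrArg S.bigHom h2).trans (S.bigHom_toElem _)).trans ?_
  set p : Path S.b S.b := ℓ.map (inclMap S.V).continuous with hp'
  have hp : ∀ t, p t ∈ S.V := fun t => (ℓ t).2
  have hf : S.fine 0 p := Or.inr hp
  rw [S.val_eq p hf, S.Φ_zero, S.g_eq_gV p hp]
  unfold gV
  have hcb : S.cV ⟨S.b, S.hb.2⟩ = Path.refl (⟨S.b, S.hb.2⟩ : ↥S.V) := by
    ext t
    show (S.c S.b) t = S.b
    rw [S.c_refl]
    rfl
  have hcor : cor p hp = ℓ := by ext t; rfl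
  rw [hcb, hcor]
  congr 1
  apply toElem_eq
  rw [Path.refl_symm]
  exact (Path.Homotopic.trans ⟨Path.Homotopy.reflTrans _⟩ ⟨Path.Homotopy.transRefl ℓ⟩)

lemma unique_claim (h' : FundamentalGroup S.X S.b →* S.G)
    (hU' : h'.comp (pi1Map (inclMap S.U) (⟨S.b, S.hb.1⟩ : ↥S.U)) = S.hU)
    (hV' : h'.comp (pi1Map (inclMap S.V) (⟨S.b, S.hb.2⟩ : ↥S.V)) = S.hV) :
    ∀ (n : ℕ) {x y : S.X} (p : Path x y), S.fine n p →
      h' (toElem ((S.c x).trans (p.trans (S.c y).symm))) = S.Φ n p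
  | 0, x, y, p, hf => by
    rw [S.Φ_zero]
    rcases hf with hp | hp
    · have hx : x ∈ S.U := p.source ▸ hp 0
      have hy : y ∈ S.U := p.target ▸ hp 1
      set L : Path S.b S.b := (S.c x).trans (p.trans (S.c y).symm) with hL
      have hLmem : ∀ t, L t ∈ S.U :=
        trans_mem _ _ (S.c_mem_U hx) (trans_mem _ _ hp (symm_mem _ (S.c_mem_U hy)))
      have hmap : (cor L hLmem).map (inclMap S.U).continuous = L := by ext t; rfl
      have e1 : toElem L = pi1Map (inclMap S.U) (⟨S.b, S.hb.1⟩ : ↥S.U) (toElem (cor L hLmem)) := by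
        rw [pi1Map_toElem, hmap]
        rfl
      have e4 := DFunLike.congr_fun hU' (toElem (cor L hLmem))
      change h' ((pi1Map (inclMap S.U) (⟨S.b, S.hb.1⟩ : ↥S.U)) (toElem (cor L hLmem))) = _ at e4
      rw [e1]
      refine e4.trans ?_
      rw [S.g_eq_gU p hp]
      unfold gU
      congr 1
      have e2 : cor L hLmem = (S.cU ⟨x, p.source ▸ hp 0⟩).trans
          ((cor p hp).trans (S.cU ⟨y, p.target ▸ hp 1⟩).symm) := by
        ext t
        show (((S.c x).trans (p.trans (S.c y).symm)) t : S.X) = _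
        simp only [Path.trans_apply]
        split_ifs <;> rfl
      rw [e2]
    · have hx : x ∈ S.V := p.source ▸ hp 0
      have hy : y ∈ S.V := p.target ▸ hp 1
      set L : Path S.b S.b := (S.c x).trans (p.trans (S.c y).symm) with hL
      have hLmem : ∀ t, L t ∈ S.V :=
        trans_mem _ _ (S.c_mem_V hx) (trans_mem _ _ hp (symm_mem _ (S.c_mem_V hy)))
      have hmap : (cor L hLmem).map (inclMap S.V).continuous = L := by ext t; rfl
      have e1 : toElem L = pi1Map (inclMap S.V) (⟨S.b, S.hb.2⟩ : ↥S.V) (toElem (cor L hLmem)) := by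
        rw [pi1Map_toElem, hmap]
        rfl
      have e4 := DFunLike.congr_fun hV' (toElem (cor L hLmem))
      change h' ((pi1Map (inclMap S.V) (⟨S.b, S.hb.2⟩ : ↥S.V)) (toElem (cor L hLmem))) = _ at e4
      rw [e1]
      refine e4.trans ?_
      rw [S.g_eq_gV p hp]
      unfold gV
      congr 1
      have e2 : cor L hLmem = (S.cV ⟨x, p.source ▸ hp 0⟩).trans
          ((cor p hp).trans (S.cV ⟨y, p.target ▸ hp 1⟩).symm) := by
        ext t
        show (((S.c x).trans (p.trans (S.c y).symm)) t : S.X) = _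
        simp only [Path.trans_apply]
        split_ifs <;> rfl
      rw [e2]
  | (n+1), x, y, p, hf => by
    have key := toElem_conj_mul (S.c x) (S.c (p (κ₁ 1))) (S.c y) (ph₁ p) (ph₂ p)
    rw [ph₁_trans_ph₂ p] at key
    rw [key, map_mul, unique_claim h' hU' hV' n (ph₂ p) hf.2,
      unique_claim h' hU' hV' n (ph₁ p) hf.1, S.Φ_succ]

/-- The main uniqueness statement. -/
lemma bigHom_unique (h' : FundamentalGroup S.X S.b →* S.G)
    (hU' : h'.comp (pi1Map (inclMap S.U) (⟨S.b, S.hb.1⟩ : ↥S.U)) = S.hU)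
    (hV' : h'.comp (pi1Map (inclMap S.V) (⟨S.b, S.hb.2⟩ : ↥S.V)) = S.hV) :
    h' = S.bigHom := by
  apply MonoidHom.ext
  intro e
  obtain ⟨p, rfl⟩ := exists_toElem e
  obtain ⟨n, hfp⟩ := S.exists_fine p
  have hmain := S.unique_claim h' hU' hV' n p hfp
  have hconj : toElem ((S.c S.b).trans (p.trans (S.c S.b).symm)) = toElem p := by
    apply toElem_eq
    rw [S.c_refl, Path.refl_symm]
    exact (Path.Homotopic.trans ⟨Path.Homotopy.reflTrans _⟩ ⟨Path.Homotopy.transRefl p⟩)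
  rw [hconj] at hmain
  rw [hmain, bigHom_toElem, S.val_eq p hfp]

end Assembly

end Setup

end SVK3

/-- standard Seifert–van Kampen theorem, universal property form.
If X = U ∪ V with U, V open and path-connected, U ∩ V path-connected and b ∈ U ∩ V,
then π₁(X,b) is the pushout of π₁(U,b) and π₁(V,b) over π₁(U∩V,b): for any group G
and homomorphisms h_U, h_V agreeing on π₁(U∩V,b) there is a unique homomorphism
h : π₁(X,b) → G compatible with both. -/
theorem statement6 (X : Type) [TopologicalSpace X]
    (U V : Set X) (hUo : IsOpen U) (hVo : IsOpen V)
    (hUc : IsPathConnected U) (hVc : IsPathConnected V)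
    (hcover : U ∪ V = Set.univ) (hUVc : IsPathConnected (U ∩ V))
    (b : X) (hb : b ∈ U ∩ V)
    (G : Type) [Group G]
    (hU : FundamentalGroup ↥U ⟨b, hb.1⟩ →* G)
    (hV : FundamentalGroup ↥V ⟨b, hb.2⟩ →* G)
    (hcompat :
      hU.comp (pi1Map (inclMap₂ Set.inter_subset_left) (⟨b, hb⟩ : ↥(U ∩ V)))
        = hV.comp (pi1Map (inclMap₂ Set.inter_subset_right) (⟨b, hb⟩ : ↥(U ∩ V)))) :
    ∃! h : FundamentalGroup X b →* G,
      h.comp (pi1Map (inclMap U) (⟨b, hb.1⟩ : ↥U)) = hU ∧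
      h.comp (pi1Map (inclMap V) (⟨b, hb.2⟩ : ↥V)) = hV := by
  let S : SVK3.Setup :=
    ⟨X, ‹TopologicalSpace X›, U, V, hUo, hVo, hUc, hVc, hcover, hUVc, b, hb, G, ‹Group G›,
      hU, hV, hcompat⟩
  refine ⟨S.bigHom, ⟨S.bigHom_comp_U, S.bigHom_comp_V⟩, ?_⟩
  rintro h' ⟨h1, h2⟩
  exact S.bigHom_unique h' h1 h2

-- sanity check that the proved theorem has no unexpected axioms
-- #print axioms statement6
end

section
/- Let 𝒰 be an open cover of X by path-connected open sets, each containing the basepoint b, such that all pairwise intersections U ∩ V and all triple intersections U ∩ V ∩ W of members of 𝒰 are path-connected. Given cohomology classes h_U ∈ H¹(U,b;G) for each U ∈ 𝒰, there exists h ∈ H¹(X,b;G) restricting to h_U for every U ∈ 𝒰 if and only if for every pair U,V ∈ 𝒰 the restrictions of h_U and h_V to H¹(U∩V,b;G) coincide; moreover such h, when it exists, is unique. -/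
/-- A `G`-valued 1-cocycle of the pair `(A, Y)`: a function on paths of `X` lying in `A`,
trivial on paths lying in `Y`, invariant under homotopies (rel endpoints) lying in `A`,
and multiplicative under concatenation of paths. -/
structure NCocycle {X : Type} [TopologicalSpace X] (A Y : Set X) (G : Type) [Group G] where
  toFun : ∀ {x y : X} (p : Path x y), Set.range p ⊆ A → G
  triv : ∀ {x y : X} (p : Path x y) (hp : Set.range p ⊆ A),
    Set.range p ⊆ Y → toFun p hp = 1
  homotopy_inv : ∀ {x y : X} (p q : Path x y) (F : p.Homotopy q),
    Set.range F ⊆ A → ∀ (hp : Set.range p ⊆ A) (hq : Set.range q ⊆ A),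
      toFun p hp = toFun q hq
  mul : ∀ {x y z : X} (p : Path x y) (q : Path y z)
    (hpq : Set.range (p.trans q) ⊆ A) (hp : Set.range p ⊆ A) (hq : Set.range q ⊆ A),
      toFun (p.trans q) hpq = toFun p hp * toFun q hq

namespace NCocycle

variable {X : Type} [TopologicalSpace X] {G : Type} [Group G]

/-- Two cocycles of `(A, Y)` are cohomologous if they differ by the action
`(c • u)(p) = c(p 0) * u(p) * c(p 1)⁻¹` of a 0-cochain `c` trivial on `Y`. -/
def Cohom {A Y : Set X} (u v : NCocycle A Y G) : Prop :=
  ∃ c : X → G, (∀ y ∈ Y, c y = 1) ∧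
    ∀ {x y : X} (p : Path x y) (hp : Set.range p ⊆ A),
      v.toFun p hp = c x * u.toFun p hp * (c y)⁻¹

/-- The non-abelian cohomology set `H¹(A, Y; G)`. -/
def H1 {X : Type} [TopologicalSpace X] (A Y : Set X) (G : Type) [Group G] :=
  Quot (Cohom (A := A) (Y := Y) (G := G))

/-- Restriction of cocycles to a smaller pair. -/
def res {A A' Y Y' : Set X} (hA : A' ⊆ A) (hY : Y' ⊆ Y) (u : NCocycle A Y G) :
    NCocycle A' Y' G where
  toFun p hp := u.toFun p (hp.trans hA)
  triv p hp h := u.triv p (hp.trans hA) (h.trans hY)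
  homotopy_inv p q F hF hp hq := u.homotopy_inv p q F (hF.trans hA) _ _
  mul p q hpq hp hq := u.mul p q _ _ _

/-- Restriction map on cohomology sets. -/
def H1res {A A' Y Y' : Set X} (hA : A' ⊆ A) (hY : Y' ⊆ Y) :
    H1 A Y G → H1 A' Y' G :=
  Quot.lift (fun u => Quot.mk _ (res hA hY u))
    (fun u v ⟨c, hc, hcv⟩ => Quot.sound
      ⟨c, fun y hy => hc y (hY hy), fun p hp => hcv p (hp.trans hA)⟩)

end NCocycle

open Set unitInterval

namespace NCocycle

variable {X : Type} [TopologicalSpace X] {G : Type} [Group G]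

theorem toFun_congr {A Y : Set X} (u : NCocycle A Y G) {x y x' y' : X}
    (p : Path x y) (q : Path x' y') (hx : x = x') (hy : y = y')
    (hpq : ∀ t, p t = q t) (hp : Set.range p ⊆ A) (hq : Set.range q ⊆ A) :
    u.toFun p hp = u.toFun q hq := by
  subst hx; subst hy
  obtain rfl : p = q := Path.ext (funext hpq)
  rfl

theorem refl_one {A Y : Set X} (u : NCocycle A Y G) {z : X}
    (hz : Set.range (Path.refl z) ⊆ A) :
    u.toFun (Path.refl z) hz = 1 := by
  have h2 : Set.range ((Path.refl z).trans (Path.refl z)) ⊆ A := by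
    rw [Path.trans_range]; exact Set.union_subset hz hz
  have hmul := u.mul (Path.refl z) (Path.refl z) h2 hz hz
  have heq : u.toFun ((Path.refl z).trans (Path.refl z)) h2 = u.toFun (Path.refl z) hz :=
    u.toFun_congr _ _ rfl rfl (fun t => by simp [Path.trans_apply]) _ _
  rw [heq] at hmul
  exact left_eq_mul.mp hmul

theorem toFun_const {A Y : Set X} (u : NCocycle A Y G) {x y : X} (q : Path x y)
    (hq : Set.range q ⊆ A) (hconst : ∀ t, q t = x) :
    u.toFun q hq = 1 := by
  have hx : x ∈ A := hq ⟨0, q.source⟩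
  have hy : y = x := by rw [← q.target, hconst 1]
  have hr : Set.range (Path.refl x) ⊆ A := by
    rw [show Set.range (Path.refl x) = {x} by simp]
    exact Set.singleton_subset_iff.mpr hx
  rw [u.toFun_congr q (Path.refl x) rfl hy (fun t => by simp [hconst t]) hq hr]
  exact u.refl_one hr

theorem cohom_equivalence (A Y : Set X) : Equivalence (Cohom (A := A) (Y := Y) (G := G)) where
  refl u := ⟨fun _ => 1, fun _ _ => rfl, fun p hp => by simp⟩
  symm := fun {u v} ⟨c, hcY, hc⟩ =>
    ⟨fun z => (c z)⁻¹, fun y hy => by show (c y)⁻¹ = 1; rw [hcY y hy]; simp,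
      fun {x y} p hp => by
      show u.toFun p hp = (c x)⁻¹ * v.toFun p hp * ((c y)⁻¹)⁻¹
      rw [hc p hp]; group⟩
  trans := fun {u v w} ⟨c, hcY, hc⟩ ⟨d, hdY, hd⟩ =>
    ⟨fun z => d z * c z, fun y hy => by show d y * c y = 1; rw [hcY y hy, hdY y hy]; simp,
      fun {x y} p hp => by
      show w.toFun p hp = d x * c x * u.toFun p hp * (d y * c y)⁻¹
      rw [hd p hp, hc p hp]; group⟩

theorem mk_eq_mk_iff {A Y : Set X} (u v : NCocycle A Y G) :
    (Quot.mk (Cohom (A := A) (Y := Y) (G := G)) u = Quot.mk _ v) ↔ Cohom u v := by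
  rw [Quot.eq]
  exact (cohom_equivalence A Y).eqvGen_iff

end NCocycle

section PieceMachinery

variable {X : Type} [TopologicalSpace X]

/-- The restriction of a path to `[a, b]`, as a path from `p a` to `p b`. -/
noncomputable def Path.piece {x y : X} (p : Path x y) (a b : I) (hab : a ≤ b) : Path (p a) (p b) where
  toFun τ := p.extend (min (max (τ : ℝ) a) b)
  continuous_toFun := p.continuous_extend.comp (by fun_prop)
  source' := by
    show p.extend (min (max ((0:ℝ)) a) b) = p a
    rw [max_eq_right a.2.1, min_eq_left (show (a:ℝ) ≤ (b:ℝ) from hab), p.extend_extends' a]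
  target' := by
    show p.extend (min (max ((1:ℝ)) a) b) = p b
    rw [max_eq_left (by exact_mod_cast a.2.2), min_eq_right (by exact_mod_cast b.2.2),
      p.extend_extends' b]

theorem Path.piece_apply {x y : X} (p : Path x y) (a b : I) (hab : a ≤ b) (τ : I) :
    p.piece a b hab τ = p.extend (min (max (τ : ℝ) a) b) := rfl

theorem Path.piece_range {x y : X} (p : Path x y) (a b : I) (hab : a ≤ b) :
    Set.range (p.piece a b hab) ⊆ p '' Set.Icc a b := by
  rintro _ ⟨τ, rfl⟩
  have h0 : (0:ℝ) ≤ min (max (τ : ℝ) a) b := le_trans a.2.1 (le_min (le_max_right _ _) hab)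
  have h1 : min (max (τ : ℝ) a) b ≤ 1 := le_trans (min_le_right _ _) b.2.2
  refine ⟨⟨_, h0, h1⟩, ⟨?_, ?_⟩, ?_⟩
  · exact show (a:ℝ) ≤ min (max (τ:ℝ) a) b from le_min (le_max_right _ _) hab
  · exact show min (max (τ:ℝ) (a:ℝ)) b ≤ (b:ℝ) from min_le_right _ _
  · exact (p.extend_apply ⟨h0, h1⟩).symm

/-- Interpolation homotopy between two reparametrizations of (the extension of) a path. -/
theorem exists_extend_homotopy {x y z w : X} (p : Path x y) (q r : Path z w) (f g : I → ℝ)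
    (hf : Continuous f) (hg : Continuous g) (hf0 : f 0 = g 0) (hf1 : f 1 = g 1)
    (hq : ∀ τ, q τ = p.extend (f τ)) (hr : ∀ τ, r τ = p.extend (g τ))
    (a b : I) (hfab : ∀ τ, f τ ∈ Set.Icc (a : ℝ) b) (hgab : ∀ τ, g τ ∈ Set.Icc (a : ℝ) b) :
    ∃ F : q.Homotopy r, Set.range F ⊆ p '' Set.Icc a b := by
  have key : ∀ s τ : I, (1 - (s : ℝ)) * f τ + s * g τ ∈ Set.Icc (a : ℝ) b := by
    intro s τ
    constructor
    · nlinarith [(hfab τ).1, (hgab τ).1, s.2.1, s.2.2]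
    · nlinarith [(hfab τ).2, (hgab τ).2, s.2.1, s.2.2]
  have hmem : ∀ s τ : I, (1 - (s : ℝ)) * f τ + s * g τ ∈ Set.Icc (0 : ℝ) 1 := fun s τ =>
    ⟨le_trans a.2.1 (key s τ).1, le_trans (key s τ).2 b.2.2⟩
  refine ⟨⟨⟨⟨fun st => p.extend ((1 - (st.1 : ℝ)) * f st.2 + st.1 * g st.2), ?_⟩, ?_, ?_⟩, ?_⟩, ?_⟩
  · exact p.continuous_extend.comp (by fun_prop)
  · intro τ
    show p.extend ((1 - ((0:I) : ℝ)) * f τ + ((0:I) : ℝ) * g τ) = q τ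
    rw [show (1 - ((0:I):ℝ)) * f τ + ((0:I):ℝ) * g τ = f τ by
      rw [show ((0:I):ℝ) = (0:ℝ) from rfl]; ring, ← hq τ]
  · intro τ
    show p.extend ((1 - ((1:I) : ℝ)) * f τ + ((1:I) : ℝ) * g τ) = r τ
    rw [show (1 - ((1:I):ℝ)) * f τ + ((1:I):ℝ) * g τ = g τ by
      rw [show ((1:I):ℝ) = (1:ℝ) from rfl]; ring, ← hr τ]
  · intro s t ht
    rcases ht with ht | ht
    · subst ht
      show p.extend ((1 - (s : ℝ)) * f 0 + s * g 0) = q 0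
      rw [hf0, show (1 - (s:ℝ)) * g 0 + s * g 0 = g 0 by ring, ← hf0, ← hq 0]
    · rw [Set.mem_singleton_iff] at ht; subst ht
      show p.extend ((1 - (s : ℝ)) * f 1 + s * g 1) = q 1
      rw [hf1, show (1 - (s:ℝ)) * g 1 + s * g 1 = g 1 by ring, ← hf1, ← hq 1]
  · rintro _ ⟨⟨s, τ⟩, rfl⟩
    show p.extend ((1 - (s : ℝ)) * f τ + s * g τ) ∈ _
    rw [p.extend_apply (hmem s τ)]
    exact ⟨⟨_, hmem s τ⟩, ⟨(key s τ).1, (key s τ).2⟩, rfl⟩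

/-- Splitting a piece at an intermediate point, up to a homotopy inside the sub-path's image. -/
theorem exists_piece_split_homotopy {x y : X} (p : Path x y) (a c b : I)
    (h1 : a ≤ c) (h2 : c ≤ b) :
    ∃ F : (p.piece a b (h1.trans h2)).Homotopy ((p.piece a c h1).trans (p.piece c b h2)),
      Set.range F ⊆ p '' Set.Icc a b := by
  have h1' : (a:ℝ) ≤ c := h1
  have h2' : (c:ℝ) ≤ b := h2
  refine exists_extend_homotopy p _ _ (fun τ => min (max (τ : ℝ) a) b)
    (fun τ => if (τ : ℝ) ≤ 1/2 then min (max (2 * (τ:ℝ)) a) c else min (max (2 * (τ:ℝ) - 1) c) b)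
    (by fun_prop) ?_ ?_ ?_ (fun τ => rfl) ?_ a b ?_ ?_
  · apply Continuous.if_le (by fun_prop) (by fun_prop) (by fun_prop) continuous_const
    intro τ hτ
    rw [hτ, show (2 * (1/2:ℝ) - 1) = 0 by norm_num, show (2 * (1/2 : ℝ)) = 1 by norm_num]
    simp [max_eq_left (show (a:ℝ) ≤ 1 by exact_mod_cast a.2.2),
      min_eq_right (show (c:ℝ) ≤ 1 by exact_mod_cast c.2.2),
      max_eq_right (show (0:ℝ) ≤ c by exact_mod_cast c.2.1), min_eq_left h2']
  · show min (max ((0:ℝ)) (a:ℝ)) b =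
      if ((0:ℝ)) ≤ 1/2 then min (max (2 * (0:ℝ)) a) c else min (max (2 * (0:ℝ) - 1) c) b
    rw [if_pos (by norm_num : (0:ℝ) ≤ 1/2), mul_zero]
    simp [max_eq_right a.2.1, min_eq_left (h1'.trans h2'), min_eq_left h1']
  · show min (max ((1:ℝ)) (a:ℝ)) b =
      if ((1:ℝ)) ≤ 1/2 then min (max (2 * (1:ℝ)) a) c else min (max (2 * (1:ℝ) - 1) c) b
    rw [if_neg (by norm_num : ¬ ((1:ℝ) ≤ 1/2)), show (2 * (1:ℝ) - 1) = 1 by norm_num]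
    simp [max_eq_left (show (a:ℝ) ≤ 1 by exact_mod_cast a.2.2),
      max_eq_left (show (c:ℝ) ≤ 1 by exact_mod_cast c.2.2), min_eq_right b.2.2]
  · intro τ
    rw [Path.trans_apply]
    split_ifs with h
    · rfl
    · rfl
  · intro τ
    exact ⟨le_min (le_max_right _ _) (h1'.trans h2'), min_le_right _ _⟩
  · intro τ
    show (if (τ:ℝ) ≤ 1/2 then min (max (2 * (τ:ℝ)) a) c else min (max (2 * (τ:ℝ) - 1) c) b)
        ∈ Set.Icc (a:ℝ) b
    split_ifs with h
    · exact ⟨le_min (le_max_right _ _) h1', le_trans (min_le_right _ _) h2'⟩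
    · exact ⟨le_min (le_trans h1' (le_max_right _ _)) (h1'.trans h2'), min_le_right _ _⟩

/-- Interpolation homotopy between two paths factoring through a continuous map on `ℝ × ℝ`
with parameter curves in a convex set. -/
theorem exists_comp_homotopy {z w : X} (Fc : ℝ × ℝ → X) (hFc : Continuous Fc)
    (q r : Path z w) (f g : I → ℝ × ℝ) (hf : Continuous f) (hg : Continuous g)
    (hf0 : f 0 = g 0) (hf1 : f 1 = g 1)
    (hq : ∀ τ, q τ = Fc (f τ)) (hr : ∀ τ, r τ = Fc (g τ))
    (R : Set (ℝ × ℝ)) (hconv : Convex ℝ R) (hfR : ∀ τ, f τ ∈ R) (hgR : ∀ τ, g τ ∈ R) :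
    ∃ F : q.Homotopy r, Set.range F ⊆ Fc '' R := by
  have key : ∀ s τ : I, (1 - (s : ℝ)) • f τ + (s : ℝ) • g τ ∈ R := fun s τ =>
    hconv (hfR τ) (hgR τ) (by nlinarith [s.2.2]) s.2.1 (by ring)
  refine ⟨⟨⟨⟨fun st => Fc ((1 - (st.1 : ℝ)) • f st.2 + (st.1 : ℝ) • g st.2), ?_⟩, ?_, ?_⟩, ?_⟩, ?_⟩
  · exact hFc.comp (by fun_prop)
  · intro τ
    show Fc ((1 - ((0:I) : ℝ)) • f τ + ((0:I) : ℝ) • g τ) = q τ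
    rw [show (1 - ((0:I):ℝ)) • f τ + ((0:I):ℝ) • g τ = f τ by
      rw [show ((0:I):ℝ) = (0:ℝ) from rfl]; module, ← hq τ]
  · intro τ
    show Fc ((1 - ((1:I) : ℝ)) • f τ + ((1:I) : ℝ) • g τ) = r τ
    rw [show (1 - ((1:I):ℝ)) • f τ + ((1:I):ℝ) • g τ = g τ by
      rw [show ((1:I):ℝ) = (1:ℝ) from rfl]; module, ← hr τ]
  · intro s t ht
    rcases ht with ht | ht
    · subst ht
      show Fc ((1 - (s : ℝ)) • f 0 + (s : ℝ) • g 0) = q 0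
      rw [hf0, show (1 - (s:ℝ)) • g 0 + (s:ℝ) • g 0 = g 0 by module, ← hf0, ← hq 0]
    · rw [Set.mem_singleton_iff] at ht; subst ht
      show Fc ((1 - (s : ℝ)) • f 1 + (s : ℝ) • g 1) = q 1
      rw [hf1, show (1 - (s:ℝ)) • g 1 + (s:ℝ) • g 1 = g 1 by module, ← hf1, ← hq 1]
  · rintro _ ⟨⟨s, τ⟩, rfl⟩
    exact ⟨_, key s τ, rfl⟩

end PieceMachinery

section Subdivisions

variable {X : Type} [TopologicalSpace X]

/-- A subdivision of the parameter interval `[a, 1]` of a path, with each sub-piece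
lying in a member of `𝒰`. -/
structure PSub (𝒰 : Set (Set X)) {x y : X} (p : Path x y) (a : I) where
  n : ℕ
  t : ℕ → I
  U : ℕ → Set X
  h0 : t 0 = a
  h1 : ∀ m, n ≤ m → t m = 1
  mono : Monotone t
  mem : ∀ i, U i ∈ 𝒰
  sub : ∀ i, p '' Set.Icc (t i) (t (i + 1)) ⊆ U i

theorem exists_psub (𝒰 : Set (Set X)) (hopen : ∀ U ∈ 𝒰, IsOpen U)
    (hcover : ⋃₀ 𝒰 = Set.univ) {x y : X} (p : Path x y) : Nonempty (PSub 𝒰 p 0) := by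
  obtain ⟨t, ht0, hmono, ⟨n, hn⟩, hsub⟩ :=
    exists_monotone_Icc_subset_open_cover_unitInterval (ι := {U // U ∈ 𝒰})
      (c := fun U => p ⁻¹' U.1) (fun U => (hopen U.1 U.2).preimage p.continuous)
      (fun τ _ => by
        obtain ⟨U, hU, hmemU⟩ := Set.sUnion_eq_univ_iff.mp hcover (p τ)
        exact Set.mem_iUnion.mpr ⟨⟨U, hU⟩, hmemU⟩)
  choose Uf hUf using hsub
  exact ⟨⟨n, t, fun i => (Uf i).1, ht0, hn, hmono, fun i => (Uf i).2,
    fun i => Set.image_subset_iff.mpr (hUf i)⟩⟩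

end Subdivisions

/-- All the data needed for the gluing construction. -/
structure GlueData (X : Type) [TopologicalSpace X] (b : X) (G : Type) [Group G] where
  𝒰 : Set (Set X)
  hopen : ∀ U ∈ 𝒰, IsOpen U
  hcover : ⋃₀ 𝒰 = Set.univ
  hconn : ∀ U ∈ 𝒰, IsPathConnected U
  hmem : ∀ U ∈ 𝒰, b ∈ U
  htriple : ∀ U ∈ 𝒰, ∀ V ∈ 𝒰, ∀ W ∈ 𝒰, IsPathConnected (U ∩ V ∩ W)
  u : ∀ U, U ∈ 𝒰 → NCocycle U {b} G
  compat : ∀ U (hU : U ∈ 𝒰) V (hV : V ∈ 𝒰),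
    NCocycle.Cohom (NCocycle.res Set.inter_subset_left subset_rfl (u U hU))
      (NCocycle.res Set.inter_subset_right subset_rfl (u V hV))

namespace GlueData

open NCocycle

variable {X : Type} [TopologicalSpace X] {b : X} {G : Type} [Group G] (S : GlueData X b G)

/-- A chosen member of the cover containing a given point. -/
noncomputable def Uof (z : X) : Set X :=
  (Set.sUnion_eq_univ_iff.mp S.hcover z).choose

theorem Uof_mem (z : X) : S.Uof z ∈ S.𝒰 :=
  (Set.sUnion_eq_univ_iff.mp S.hcover z).choose_spec.1

theorem mem_Uof (z : X) : z ∈ S.Uof z :=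
  (Set.sUnion_eq_univ_iff.mp S.hcover z).choose_spec.2

/-- The comparison 0-cochain between the chosen cocycles on `U` and `V`. -/
noncomputable def kk (U : Set X) (hU : U ∈ S.𝒰) (V : Set X) (hV : V ∈ S.𝒰) : X → G :=
  (S.compat U hU V hV).choose

theorem kk_b (U : Set X) (hU : U ∈ S.𝒰) (V : Set X) (hV : V ∈ S.𝒰) :
    S.kk U hU V hV b = 1 :=
  (S.compat U hU V hV).choose_spec.1 b rfl

theorem kk_rel (U : Set X) (hU : U ∈ S.𝒰) (V : Set X) (hV : V ∈ S.𝒰) {x y : X}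
    (p : Path x y) (hp : Set.range p ⊆ U ∩ V)
    (hpU : Set.range p ⊆ U) (hpV : Set.range p ⊆ V) :
    (S.u V hV).toFun p hpV =
      S.kk U hU V hV x * (S.u U hU).toFun p hpU * (S.kk U hU V hV y)⁻¹ :=
  (S.compat U hU V hV).choose_spec.2 p hp

theorem kk_det (U : Set X) (hU : U ∈ S.𝒰) (V : Set X) (hV : V ∈ S.𝒰) {z : X}
    (q : Path b z) (hq : Set.range q ⊆ U ∩ V)
    (hqU : Set.range q ⊆ U) (hqV : Set.range q ⊆ V) :
    S.kk U hU V hV z = ((S.u V hV).toFun q hqV)⁻¹ * (S.u U hU).toFun q hqU := by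
  have h := S.kk_rel U hU V hV q hq hqU hqV
  rw [S.kk_b U hU V hV, one_mul] at h
  rw [h]; group

theorem kk_cocycle (U : Set X) (hU : U ∈ S.𝒰) (V : Set X) (hV : V ∈ S.𝒰)
    (W : Set X) (hW : W ∈ S.𝒰) {z : X} (hz : z ∈ U ∩ V ∩ W) :
    S.kk U hU W hW z = S.kk V hV W hW z * S.kk U hU V hV z := by
  have hb : b ∈ U ∩ V ∩ W := ⟨⟨S.hmem U hU, S.hmem V hV⟩, S.hmem W hW⟩
  obtain ⟨γ, hγ⟩ := (S.htriple U hU V hV W hW).joinedIn b hb z hz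
  have hγr : Set.range γ ⊆ U ∩ V ∩ W := Set.range_subset_iff.mpr hγ
  have hγU : Set.range γ ⊆ U := fun t ht => (hγr ht).1.1
  have hγV : Set.range γ ⊆ V := fun t ht => (hγr ht).1.2
  have hγW : Set.range γ ⊆ W := fun t ht => (hγr ht).2
  rw [S.kk_det U hU W hW γ (Set.subset_inter hγU hγW) hγU hγW,
    S.kk_det V hV W hW γ (Set.subset_inter hγV hγW) hγV hγW,
    S.kk_det U hU V hV γ (Set.subset_inter hγU hγV) hγU hγV]
  group

/-- The normalizing element at a point `z`, relative to a member `U` of the cover. -/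
noncomputable def aG (z : X) (U : Set X) (hU : U ∈ S.𝒰) : G :=
  S.kk U hU (S.Uof z) (S.Uof_mem z) z

theorem aG_b (U : Set X) (hU : U ∈ S.𝒰) : S.aG b U hU = 1 :=
  S.kk_b U hU (S.Uof b) (S.Uof_mem b)

theorem aG_trans (U : Set X) (hU : U ∈ S.𝒰) (V : Set X) (hV : V ∈ S.𝒰) {z : X}
    (hz : z ∈ U ∩ V) : S.aG z U hU = S.aG z V hV * S.kk U hU V hV z :=
  S.kk_cocycle U hU V hV (S.Uof z) (S.Uof_mem z) ⟨hz, S.mem_Uof z⟩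

/-- The normalized local invariant of a path lying in a member `U` of the cover. -/
noncomputable def phiU {U : Set X} (hU : U ∈ S.𝒰) {x y : X} (p : Path x y)
    (hp : Set.range p ⊆ U) : G :=
  S.aG x U hU * (S.u U hU).toFun p hp * (S.aG y U hU)⁻¹

theorem phiU_congr {U V : Set X} (hU : U ∈ S.𝒰) (hV : V ∈ S.𝒰) (hUV : U = V)
    {x y x' y' : X} (p : Path x y) (q : Path x' y') (hx : x = x') (hy : y = y')
    (hpq : ∀ t, p t = q t) (hp : Set.range p ⊆ U) (hq : Set.range q ⊆ V) :
    S.phiU hU p hp = S.phiU hV q hq := by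
  subst hUV; subst hx; subst hy
  obtain rfl : p = q := Path.ext (funext hpq)
  rfl

theorem phiU_indep {U V : Set X} (hU : U ∈ S.𝒰) (hV : V ∈ S.𝒰) {x y : X} (p : Path x y)
    (hpU : Set.range p ⊆ U) (hpV : Set.range p ⊆ V) :
    S.phiU hU p hpU = S.phiU hV p hpV := by
  have hx : x ∈ U ∩ V := ⟨hpU ⟨0, p.source⟩, hpV ⟨0, p.source⟩⟩
  have hy : y ∈ U ∩ V := ⟨hpU ⟨1, p.target⟩, hpV ⟨1, p.target⟩⟩
  have hrel := S.kk_rel U hU V hV p (Set.subset_inter hpU hpV) hpU hpV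
  show _ = S.aG x V hV * (S.u V hV).toFun p hpV * (S.aG y V hV)⁻¹
  rw [hrel, phiU, S.aG_trans U hU V hV hx, S.aG_trans U hU V hV hy]
  group

theorem phiU_mul {U : Set X} (hU : U ∈ S.𝒰) {x y z : X} (p : Path x y) (q : Path y z)
    (hpq : Set.range (p.trans q) ⊆ U) (hp : Set.range p ⊆ U) (hq : Set.range q ⊆ U) :
    S.phiU hU (p.trans q) hpq = S.phiU hU p hp * S.phiU hU q hq := by
  rw [phiU, phiU, phiU, (S.u U hU).mul p q hpq hp hq]
  group

theorem phiU_hom {U : Set X} (hU : U ∈ S.𝒰) {x y : X} {p q : Path x y} (F : p.Homotopy q)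
    (hF : Set.range F ⊆ U) (hp : Set.range p ⊆ U) (hq : Set.range q ⊆ U) :
    S.phiU hU p hp = S.phiU hU q hq := by
  rw [phiU, phiU, (S.u U hU).homotopy_inv p q F hF hp hq]

theorem phiU_const {U : Set X} (hU : U ∈ S.𝒰) {x y : X} (p : Path x y)
    (hp : Set.range p ⊆ U) (hconst : ∀ t, p t = x) : S.phiU hU p hp = 1 := by
  have hy : y = x := by rw [← p.target, hconst 1]
  subst hy
  rw [phiU, (S.u U hU).toFun_const p hp hconst]
  group

theorem phiU_split {U : Set X} (hU : U ∈ S.𝒰) {x y : X} (p : Path x y) (a c bb : I)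
    (h1 : a ≤ c) (h2 : c ≤ bb) (hsub : p '' Set.Icc a bb ⊆ U)
    (hab : Set.range (p.piece a bb (h1.trans h2)) ⊆ U)
    (hac : Set.range (p.piece a c h1) ⊆ U) (hcb : Set.range (p.piece c bb h2) ⊆ U) :
    S.phiU hU (p.piece a bb (h1.trans h2)) hab =
      S.phiU hU (p.piece a c h1) hac * S.phiU hU (p.piece c bb h2) hcb := by
  obtain ⟨F, hF⟩ := exists_piece_split_homotopy p a c bb h1 h2
  have htr : Set.range ((p.piece a c h1).trans (p.piece c bb h2)) ⊆ U := by
    rw [Path.trans_range]; exact Set.union_subset hac hcb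
  rw [S.phiU_hom hU F (hF.trans hsub) hab htr]
  exact S.phiU_mul hU _ _ htr hac hcb

end GlueData

namespace GlueData

open NCocycle

variable {X : Type} [TopologicalSpace X] {b : X} {G : Type} [Group G] (S : GlueData X b G)

theorem listProd_succ {G : Type} [Group G] (f : ℕ → G) (n : ℕ) :
    ((List.range (n + 1)).map f).prod = ((List.range n).map f).prod * f n := by
  rw [List.range_succ, List.map_append, List.prod_append]
  simp

theorem listProd_shift {G : Type} [Group G] (f : ℕ → G) (n : ℕ) :
    ((List.range (n + 1)).map f).prod = f 0 * ((List.range n).map fun i => f (i + 1)).prod := by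
  rw [List.range_succ_eq_map, List.map_cons, List.prod_cons, List.map_map]
  rfl

/-- The product of local invariants over the pieces of a subdivision. -/
noncomputable def pprod {x y : X} {p : Path x y} {a : I} (D : PSub S.𝒰 p a) : G :=
  ((List.range D.n).map fun i =>
    S.phiU (D.mem i) (p.piece (D.t i) (D.t (i + 1)) (D.mono (Nat.le_succ i)))
      ((p.piece_range _ _ _).trans (D.sub i))).prod

theorem pprod_of_one {x y : X} {p : Path x y} {a : I} (D : PSub S.𝒰 p a) (ha : a = 1) :
    S.pprod D = 1 := by
  apply List.prod_eq_one
  intro g hg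
  obtain ⟨i, _, rfl⟩ := List.mem_map.mp hg
  have hti : D.t i = 1 := le_antisymm (le_one _) (by
    have h := D.mono (Nat.zero_le i); rw [D.h0] at h; exact (le_of_eq ha.symm).trans h)
  have hti1 : D.t (i + 1) = 1 := le_antisymm (le_one _) (by
    have h := D.mono (Nat.zero_le (i + 1)); rw [D.h0] at h; exact (le_of_eq ha.symm).trans h)
  apply S.phiU_const
  intro τ
  rw [Path.piece_apply, hti, hti1]
  have hmm : min (max (τ:ℝ) ((1:I):ℝ)) ((1:I):ℝ) = ((1:I):ℝ) := by
    rw [max_eq_right (show (τ:ℝ) ≤ ((1:I):ℝ) from τ.2.2), min_self]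
  rw [hmm, p.extend_extends' 1]

/-- The tail of a subdivision with at least one piece. -/
def _root_.PSub.tail {𝒰 : Set (Set X)} {x y : X} {p : Path x y} {a : I} (D : PSub 𝒰 p a) {n : ℕ}
    (hn : D.n = n + 1) : PSub 𝒰 p (D.t 1) where
  n := n
  t i := D.t (i + 1)
  U i := D.U (i + 1)
  h0 := rfl
  h1 m hm := D.h1 (m + 1) (by omega)
  mono _ _ h := D.mono (by omega)
  mem i := D.mem (i + 1)
  sub i := D.sub (i + 1)

theorem pprod_head_tail {x y : X} {p : Path x y} {a : I} (D : PSub S.𝒰 p a) {n : ℕ}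
    (hn : D.n = n + 1) :
    S.pprod D = S.phiU (D.mem 0) (p.piece (D.t 0) (D.t 1) (D.mono (Nat.le_succ 0)))
        ((p.piece_range _ _ _).trans (D.sub 0)) * S.pprod (D.tail hn) := by
  show ((List.range D.n).map _).prod = _
  rw [hn, listProd_shift]
  rfl

/-- Core step of subdivision independence. -/
theorem pprod_core {x y : X} {p : Path x y} {a : I} (N n m : ℕ)
    (ih : ∀ (a : I) (E E' : PSub S.𝒰 p a), E.n + E'.n ≤ N → S.pprod E = S.pprod E')
    (D D' : PSub S.𝒰 p a) (hn : D.n = n + 1) (hm : D'.n = m + 1)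
    (hN : n + (m + 1) ≤ N) (h11 : D.t 1 ≤ D'.t 1) :
    S.pprod D = S.pprod D' := by
  have h00 : D.t 0 = D'.t 0 := by rw [D.h0, D'.h0]
  have h01 : D'.t 0 ≤ D.t 1 := by rw [← h00]; exact D.mono (by omega)
  -- the refined tail subdivision starting at `D.t 1`
  have hEmono : Monotone (fun k => if k = 0 then D.t 1 else D'.t k) := by
    apply monotone_nat_of_le_succ
    intro k
    cases k with
    | zero => simpa using h11
    | succ k =>
      simp only [Nat.succ_ne_zero, if_neg, Nat.add_eq, reduceIte]
      exact D'.mono (by omega)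
  let E : PSub S.𝒰 p (D.t 1) :=
    { n := m + 1
      t := fun k => if k = 0 then D.t 1 else D'.t k
      U := D'.U
      h0 := rfl
      h1 := fun k hk => by
        show (if k = 0 then D.t 1 else D'.t k) = 1
        rw [if_neg (by omega)]; exact D'.h1 k (by omega)
      mono := hEmono
      mem := D'.mem
      sub := fun k => by
        cases k with
        | zero =>
          show p '' Set.Icc (D.t 1) (if 1 = 0 then D.t 1 else D'.t 1) ⊆ D'.U 0
          rw [if_neg (by omega)]
          refine (Set.image_mono (f := p) (Set.Icc_subset_Icc ?_ le_rfl)).trans (D'.sub 0)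
          exact h01
        | succ k =>
          show p '' Set.Icc (if k + 1 = 0 then _ else D'.t (k + 1))
              (if k + 2 = 0 then _ else D'.t (k + 2)) ⊆ D'.U (k + 1)
          rw [if_neg (by omega), if_neg (by omega)]
          exact D'.sub (k + 1) }
  have htail : S.pprod (D.tail hn) = S.pprod E := ih (D.t 1) (D.tail hn) E (by simp [PSub.tail, E]; omega)
  have hE : S.pprod E = S.phiU (D'.mem 0) (p.piece (D.t 1) (D'.t 1) h11)
      ((p.piece_range _ _ _).trans ((Set.image_mono (f := p) (Set.Icc_subset_Icc h01 le_rfl)).trans (D'.sub 0)))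
      * S.pprod (E.tail (rfl : E.n = m + 1)) := by
    have hE0 : S.phiU (E.mem 0) (p.piece (E.t 0) (E.t 1) (E.mono (Nat.le_succ 0)))
        ((p.piece_range _ _ _).trans (E.sub 0)) =
        S.phiU (D'.mem 0) (p.piece (D.t 1) (D'.t 1) h11)
        ((p.piece_range _ _ _).trans ((Set.image_mono (f := p)
          (Set.Icc_subset_Icc h01 le_rfl)).trans (D'.sub 0))) :=
      S.phiU_congr _ _ rfl _ _ rfl rfl (fun τ => rfl) _ _
    rw [S.pprod_head_tail E (rfl : E.n = m + 1), hE0]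
  have hD'' : S.pprod (E.tail (rfl : E.n = m + 1)) = S.pprod (D'.tail hm) := rfl
  have hD'split : S.phiU (D'.mem 0) (p.piece (D'.t 0) (D'.t 1) (D'.mono (Nat.le_succ 0)))
      ((p.piece_range _ _ _).trans (D'.sub 0)) =
      S.phiU (D'.mem 0) (p.piece (D'.t 0) (D.t 1) h01)
        ((p.piece_range _ _ _).trans ((Set.image_mono (f := p) (Set.Icc_subset_Icc le_rfl h11)).trans (D'.sub 0)))
      * S.phiU (D'.mem 0) (p.piece (D.t 1) (D'.t 1) h11)
        ((p.piece_range _ _ _).trans ((Set.image_mono (f := p) (Set.Icc_subset_Icc h01 le_rfl)).trans (D'.sub 0))) := by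
    exact S.phiU_split (D'.mem 0) p (D'.t 0) (D.t 1) (D'.t 1) h01 h11 (D'.sub 0) _ _ _
  have hhead : S.phiU (D.mem 0) (p.piece (D.t 0) (D.t 1) (D.mono (Nat.le_succ 0)))
      ((p.piece_range _ _ _).trans (D.sub 0)) =
      S.phiU (D'.mem 0) (p.piece (D'.t 0) (D.t 1) h01)
        ((p.piece_range _ _ _).trans ((Set.image_mono (f := p) (Set.Icc_subset_Icc le_rfl h11)).trans (D'.sub 0))) := by
    rw [S.phiU_indep (D.mem 0) (D'.mem 0) _ ((p.piece_range _ _ _).trans (D.sub 0))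
      ((p.piece_range _ _ _).trans ((Set.image_mono (f := p)
        (Set.Icc_subset_Icc (le_of_eq h00.symm) h11)).trans (D'.sub 0)))]
    apply S.phiU_congr _ _ rfl _ _ (by rw [h00]) rfl
    intro τ
    rw [Path.piece_apply, Path.piece_apply, h00]
  rw [S.pprod_head_tail D hn, S.pprod_head_tail D' hm, htail, hE, hD'', hhead, hD'split]
  rw [mul_assoc]

theorem pprod_eq_aux {x y : X} {p : Path x y} :
    ∀ (N : ℕ) (a : I) (D D' : PSub S.𝒰 p a), D.n + D'.n ≤ N → S.pprod D = S.pprod D' := by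
  intro N
  induction N with
  | zero =>
    intro a D D' hle
    have hD : D.n = 0 := by omega
    have ha : a = 1 := by rw [← D.h0]; exact D.h1 0 (by omega)
    rw [S.pprod_of_one D ha, S.pprod_of_one D' ha]
  | succ N ihN =>
    intro a D D' hle
    rcases Nat.eq_zero_or_pos D.n with h0n | h0n
    · have ha : a = 1 := by rw [← D.h0]; exact D.h1 0 (by omega)
      rw [S.pprod_of_one D ha, S.pprod_of_one D' ha]
    rcases Nat.eq_zero_or_pos D'.n with h0m | h0m
    · have ha : a = 1 := by rw [← D'.h0]; exact D'.h1 0 (by omega)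
      rw [S.pprod_of_one D ha, S.pprod_of_one D' ha]
    obtain ⟨n, hn⟩ : ∃ n, D.n = n + 1 := ⟨D.n - 1, by omega⟩
    obtain ⟨m, hm⟩ : ∃ m, D'.n = m + 1 := ⟨D'.n - 1, by omega⟩
    rcases le_total (D.t 1) (D'.t 1) with h11 | h11
    · exact S.pprod_core N n m ihN D D' hn hm (by omega) h11
    · exact (S.pprod_core N m n ihN D' D hm hn (by omega) h11).symm

theorem pprod_eq {x y : X} {p : Path x y} {a : I} (D D' : PSub S.𝒰 p a) :
    S.pprod D = S.pprod D' :=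
  S.pprod_eq_aux (D.n + D'.n) a D D' le_rfl

end GlueData

section TransHelpers

variable {X : Type} [TopologicalSpace X]

theorem affine_minmax (k d τ u v : ℝ) (hk : 0 < k) :
    k * min (max τ u) v + d = min (max (k * τ + d) (k * u + d)) (k * v + d) := by
  have hmax : k * max τ u + d = max (k * τ + d) (k * u + d) := by
    rcases le_total τ u with h | h
    · rw [max_eq_right h, max_eq_right (by nlinarith)]
    · rw [max_eq_left h, max_eq_left (by nlinarith)]
  have hmin : k * min (max τ u) v + d = min (k * max τ u + d) (k * v + d) := by
    rcases le_total (max τ u) v with h | h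
    · rw [min_eq_left h, min_eq_left (by nlinarith)]
    · rw [min_eq_right h, min_eq_right (by nlinarith)]
  rw [hmin, hmax]

theorem Path.trans_extend_le {x y z : X} (p : Path x y) (q : Path y z) {c : ℝ}
    (h0 : 0 ≤ c) (h : c ≤ 1/2) : (p.trans q).extend c = p.extend (2 * c) := by
  rw [Path.extend_apply _ ⟨h0, by linarith⟩, Path.trans_apply]
  rw [dif_pos (show ((⟨c, h0, by linarith⟩ : I) : ℝ) ≤ 1/2 from h)]
  exact (p.extend_apply ⟨by linarith, by linarith⟩).symm

theorem Path.trans_extend_ge {x y z : X} (p : Path x y) (q : Path y z) {c : ℝ}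
    (h0 : 1/2 ≤ c) (h : c ≤ 1) : (p.trans q).extend c = q.extend (2 * c - 1) := by
  rw [Path.extend_apply _ ⟨by linarith, h⟩, Path.trans_apply]
  split_ifs with hc
  · have hc2 : c = 1/2 := le_antisymm hc h0
    have hmem : 2 * c ∈ Set.Icc (0:ℝ) 1 := by rw [hc2]; norm_num
    have key : p.extend (2 * c) = q.extend (2 * c - 1) := by
      rw [hc2, show (2 * (1/2:ℝ) - 1) = 0 by norm_num, show (2 * (1/2 : ℝ)) = 1 by norm_num,
        Path.extend_one, Path.extend_zero]
    exact ((p.extend_apply hmem).symm).trans key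
  · push_neg at hc
    exact (q.extend_apply ⟨by linarith, by linarith⟩).symm

/-- `s / 2` in the unit interval. -/
noncomputable def halfI (s : I) : I := ⟨(s : ℝ) / 2, by linarith [s.2.1], by linarith [s.2.2]⟩

/-- `(1 + s) / 2` in the unit interval. -/
noncomputable def halfI' (s : I) : I := ⟨(1 + (s : ℝ)) / 2, by linarith [s.2.1], by linarith [s.2.2]⟩

theorem halfI_le_half (s : I) : ((halfI s : I) : ℝ) ≤ 1/2 := by
  show (s : ℝ) / 2 ≤ 1/2; linarith [s.2.2]

theorem half_le_halfI' (s : I) : (1/2 : ℝ) ≤ ((halfI' s : I) : ℝ) := by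
  show (1/2 : ℝ) ≤ (1 + (s:ℝ)) / 2; linarith [s.2.1]

theorem Path.trans_halfI {x y z : X} (p : Path x y) (q : Path y z) (s : I) :
    (p.trans q) (halfI s) = p s := by
  have h := Path.trans_extend_le p q (halfI s).2.1 (halfI_le_half s)
  rw [Path.extend_extends' (p.trans q) (halfI s)] at h
  rw [h, show (2 * ((halfI s : I):ℝ)) = (s:ℝ) from by show 2 * ((s:ℝ)/2) = (s:ℝ); ring,
    p.extend_extends' s]

theorem Path.trans_halfI' {x y z : X} (p : Path x y) (q : Path y z) (s : I) :
    (p.trans q) (halfI' s) = q s := by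
  have h := Path.trans_extend_ge p q (half_le_halfI' s) (halfI' s).2.2
  rw [Path.extend_extends' (p.trans q) (halfI' s)] at h
  rw [h, show (2 * ((halfI' s : I):ℝ) - 1) = (s:ℝ) from by
    show 2 * ((1 + (s:ℝ))/2) - 1 = (s:ℝ); ring, q.extend_extends' s]

noncomputable def Path.piece2 {x y : X} (p : Path x y) (a b : I) (hab : a ≤ b) :
    Path (p a) (p b) where
  toFun τ := p.extend (min (max (2 * (τ:ℝ)) a) b)
  continuous_toFun := p.continuous_extend.comp (by fun_prop)
  source' := by
    show p.extend (min (max (2 * ((0:I):ℝ)) a) b) = p a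
    rw [show (2 * ((0:I):ℝ)) = (0:ℝ) by norm_num, max_eq_right a.2.1,
      min_eq_left (show (a:ℝ) ≤ b from hab), p.extend_extends' a]
  target' := by
    show p.extend (min (max (2 * ((1:I):ℝ)) a) b) = p b
    rw [show (2 * ((1:I):ℝ)) = (2:ℝ) by norm_num,
      max_eq_left (by linarith [a.2.2] : (a:ℝ) ≤ 2),
      min_eq_right (by linarith [b.2.2] : (b:ℝ) ≤ 2), p.extend_extends' b]

theorem Path.piece2_range {x y : X} (p : Path x y) (a b : I) (hab : a ≤ b) :
    Set.range (p.piece2 a b hab) ⊆ p '' Set.Icc a b := by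
  rintro _ ⟨τ, rfl⟩
  have h0 : (0:ℝ) ≤ min (max (2 * (τ:ℝ)) a) b := le_trans a.2.1 (le_min (le_max_right _ _) hab)
  have h1 : min (max (2 * (τ:ℝ)) a) b ≤ 1 := le_trans (min_le_right _ _) b.2.2
  refine ⟨⟨_, h0, h1⟩, ⟨?_, ?_⟩, ?_⟩
  · exact show (a:ℝ) ≤ min (max (2 * (τ:ℝ)) a) b from le_min (le_max_right _ _) hab
  · exact show min (max (2 * (τ:ℝ)) (a:ℝ)) b ≤ (b:ℝ) from min_le_right _ _
  · exact (p.extend_apply ⟨h0, h1⟩).symm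

theorem exists_piece2_homotopy {x y : X} (p : Path x y) (a b : I) (hab : a ≤ b) :
    ∃ F : (p.piece2 a b hab).Homotopy (p.piece a b hab),
      Set.range F ⊆ p '' Set.Icc a b := by
  have hab' : (a:ℝ) ≤ b := hab
  refine exists_extend_homotopy p _ _ (fun τ => min (max (2 * (τ:ℝ)) a) b)
    (fun τ => min (max ((τ:ℝ)) a) b) (by fun_prop) (by fun_prop) ?_ ?_
    (fun τ => rfl) (fun τ => rfl) a b ?_ ?_
  · show min (max (2 * ((0:I):ℝ)) a) b = min (max ((0:I):ℝ) a) b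
    rw [show (2 * ((0:I):ℝ)) = ((0:I):ℝ) by norm_num]
  · show min (max (2 * ((1:I):ℝ)) a) b = min (max ((1:I):ℝ) a) b
    rw [show (2 * ((1:I):ℝ)) = (2:ℝ) by norm_num,
      max_eq_left (by linarith [a.2.2] : (a:ℝ) ≤ 2),
      min_eq_right (by linarith [b.2.2] : (b:ℝ) ≤ 2),
      max_eq_left (show (a:ℝ) ≤ ((1:I):ℝ) from a.2.2),
      min_eq_right (show (b:ℝ) ≤ ((1:I):ℝ) from b.2.2)]
  · exact fun τ => ⟨le_min (le_max_right _ _) hab', min_le_right _ _⟩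
  · exact fun τ => ⟨le_min (le_max_right _ _) hab', min_le_right _ _⟩

noncomputable def Path.piece2' {x y : X} (p : Path x y) (a b : I) (hab : a ≤ b) :
    Path (p a) (p b) where
  toFun τ := p.extend (min (max (2 * (τ:ℝ) - 1) a) b)
  continuous_toFun := p.continuous_extend.comp (by fun_prop)
  source' := by
    show p.extend (min (max (2 * ((0:I):ℝ) - 1) a) b) = p a
    rw [show (2 * ((0:I):ℝ) - 1) = (-1:ℝ) by norm_num,
      max_eq_right (by linarith [a.2.1] : (-1:ℝ) ≤ a),
      min_eq_left (show (a:ℝ) ≤ b from hab), p.extend_extends' a]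
  target' := by
    show p.extend (min (max (2 * ((1:I):ℝ) - 1) a) b) = p b
    rw [show (2 * ((1:I):ℝ) - 1) = (1:ℝ) by norm_num,
      max_eq_left (show (a:ℝ) ≤ 1 from a.2.2),
      min_eq_right (show (b:ℝ) ≤ 1 from b.2.2), p.extend_extends' b]

theorem Path.piece2'_range {x y : X} (p : Path x y) (a b : I) (hab : a ≤ b) :
    Set.range (p.piece2' a b hab) ⊆ p '' Set.Icc a b := by
  rintro _ ⟨τ, rfl⟩
  have h0 : (0:ℝ) ≤ min (max (2 * (τ:ℝ) - 1) a) b :=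
    le_trans a.2.1 (le_min (le_max_right _ _) hab)
  have h1 : min (max (2 * (τ:ℝ) - 1) a) b ≤ 1 := le_trans (min_le_right _ _) b.2.2
  refine ⟨⟨_, h0, h1⟩, ⟨?_, ?_⟩, ?_⟩
  · exact show (a:ℝ) ≤ min (max (2 * (τ:ℝ) - 1) a) b from le_min (le_max_right _ _) hab
  · exact show min (max (2 * (τ:ℝ) - 1) (a:ℝ)) b ≤ (b:ℝ) from min_le_right _ _
  · exact (p.extend_apply ⟨h0, h1⟩).symm

theorem exists_piece2'_homotopy {x y : X} (p : Path x y) (a b : I) (hab : a ≤ b) :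
    ∃ F : (p.piece2' a b hab).Homotopy (p.piece a b hab),
      Set.range F ⊆ p '' Set.Icc a b := by
  have hab' : (a:ℝ) ≤ b := hab
  refine exists_extend_homotopy p _ _ (fun τ => min (max (2 * (τ:ℝ) - 1) a) b)
    (fun τ => min (max ((τ:ℝ)) a) b) (by fun_prop) (by fun_prop) ?_ ?_
    (fun τ => rfl) (fun τ => rfl) a b ?_ ?_
  · show min (max (2 * ((0:I):ℝ) - 1) a) b = min (max ((0:I):ℝ) a) b
    rw [show (2 * ((0:I):ℝ) - 1) = (-1:ℝ) by norm_num,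
      max_eq_right (by linarith [a.2.1] : (-1:ℝ) ≤ a),
      max_eq_right (show ((0:I):ℝ) ≤ a from a.2.1)]
  · show min (max (2 * ((1:I):ℝ) - 1) a) b = min (max ((1:I):ℝ) a) b
    rw [show (2 * ((1:I):ℝ) - 1) = (1:ℝ) by norm_num,
      show ((1:I):ℝ) = (1:ℝ) from rfl]
  · exact fun τ => ⟨le_min (le_max_right _ _) hab', min_le_right _ _⟩
  · exact fun τ => ⟨le_min (le_max_right _ _) hab', min_le_right _ _⟩

end TransHelpers

namespace GlueData

open NCocycle

variable {X : Type} [TopologicalSpace X] {b : X} {G : Type} [Group G] (S : GlueData X b G)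

/-- The glued invariant of an arbitrary path. -/
noncomputable def Phi {x y : X} (p : Path x y) : G :=
  S.pprod (Classical.choice (exists_psub S.𝒰 S.hopen S.hcover p))

theorem pprod_eq_Phi {x y : X} {p : Path x y} (D : PSub S.𝒰 p 0) : S.pprod D = S.Phi p :=
  S.pprod_eq D _

theorem Phi_eq_phiU {U : Set X} (hU : U ∈ S.𝒰) {x y : X} (p : Path x y)
    (hp : Set.range p ⊆ U) : S.Phi p = S.phiU hU p hp := by
  have hy : y ∈ U := hp ⟨1, p.target⟩
  let D : PSub S.𝒰 p 0 :=
    { n := 1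
      t := fun i => if i = 0 then 0 else 1
      U := fun _ => U
      h0 := rfl
      h1 := fun m hm => by
        show (if m = 0 then (0:I) else 1) = 1
        rw [if_neg (by omega)]
      mono := by
        apply monotone_nat_of_le_succ
        intro k
        cases k with
        | zero =>
          show (0:I) ≤ (if 0 + 1 = 0 then (0:I) else 1)
          rw [if_neg (by omega)]
          exact (by norm_num : ((0:I):ℝ) ≤ ((1:I):ℝ))
        | succ k =>
          show (if k + 1 = 0 then (0:I) else 1) ≤ (if k + 2 = 0 then (0:I) else 1)
          rw [if_neg (by omega), if_neg (by omega)]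
      mem := fun _ => hU
      sub := fun i => by
        cases i with
        | zero =>
          show p '' Set.Icc 0 (if 1 = 0 then (0:I) else 1) ⊆ U
          rw [if_neg (by omega)]
          exact (Set.image_subset_range p _).trans hp
        | succ i =>
          show p '' Set.Icc (if i + 1 = 0 then (0:I) else 1) (if i + 2 = 0 then (0:I) else 1) ⊆ U
          rw [if_neg (by omega), if_neg (by omega)]
          rintro _ ⟨τ, hτ, rfl⟩
          have : τ = 1 := le_antisymm (le_one _) hτ.1
          rw [this, p.target]
          exact hy
      }
  rw [← S.pprod_eq_Phi D]
  have h1 : S.pprod D = S.phiU hU (p.piece (D.t 0) (D.t 1) (D.mono (Nat.le_succ 0)))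
      ((p.piece_range _ _ _).trans (D.sub 0)) * 1 := by
    show ((List.range 1).map _).prod = _
    rw [show List.range 1 = [0] from rfl, List.map_cons, List.map_nil, List.prod_cons,
      List.prod_nil]
  rw [h1, mul_one]
  apply S.phiU_congr _ _ rfl _ _ p.source p.target
  intro τ
  show p.extend (min (max (τ:ℝ) ((0:I):ℝ)) ((1:I):ℝ)) = p τ
  rw [show ((0:I):ℝ) = (0:ℝ) from rfl, show ((1:I):ℝ) = (1:ℝ) from rfl,
    max_eq_left τ.2.1, min_eq_left τ.2.2, p.extend_extends' τ]

theorem phiU_piece2 {U : Set X} (hU : U ∈ S.𝒰) {x y : X} (p : Path x y) (a bb : I)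
    (hab : a ≤ bb) (hsub : p '' Set.Icc a bb ⊆ U) :
    S.phiU hU (p.piece2 a bb hab) ((p.piece2_range a bb hab).trans hsub) =
      S.phiU hU (p.piece a bb hab) ((p.piece_range a bb hab).trans hsub) := by
  obtain ⟨F, hF⟩ := exists_piece2_homotopy p a bb hab
  exact S.phiU_hom hU F (hF.trans hsub) _ _

theorem phiU_piece2' {U : Set X} (hU : U ∈ S.𝒰) {x y : X} (p : Path x y) (a bb : I)
    (hab : a ≤ bb) (hsub : p '' Set.Icc a bb ⊆ U) :
    S.phiU hU (p.piece2' a bb hab) ((p.piece2'_range a bb hab).trans hsub) =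
      S.phiU hU (p.piece a bb hab) ((p.piece_range a bb hab).trans hsub) := by
  obtain ⟨F, hF⟩ := exists_piece2'_homotopy p a bb hab
  exact S.phiU_hom hU F (hF.trans hsub) _ _

theorem Phi_trans {x y z : X} (p : Path x y) (q : Path y z) :
    S.Phi (p.trans q) = S.Phi p * S.Phi q := by
  obtain D := Classical.choice (exists_psub S.𝒰 S.hopen S.hcover p)
  obtain E := Classical.choice (exists_psub S.𝒰 S.hopen S.hcover q)
  have hD1 : 1 ≤ D.n := by
    by_contra hcon
    have : D.n = 0 := by omega
    have h01 : (0 : I) = 1 := by rw [← D.h0]; exact D.h1 0 (by omega)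
    exact zero_ne_one (congrArg (fun s : I => (s : ℝ)) h01)
  have hE1 : 1 ≤ E.n := by
    by_contra hcon
    have : E.n = 0 := by omega
    have h01 : (0 : I) = 1 := by rw [← E.h0]; exact E.h1 0 (by omega)
    exact zero_ne_one (congrArg (fun s : I => (s : ℝ)) h01)
  -- the concatenated subdivision
  have hCt : ∀ k, (if D.n + k ≤ D.n then halfI (D.t (D.n + k)) else halfI' (E.t (D.n + k - D.n)))
      = halfI' (E.t k) := by
    intro k
    cases k with
    | zero =>
      rw [if_pos (by omega), Nat.add_zero, D.h1 D.n le_rfl, E.h0]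
      apply Subtype.ext
      show ((1:I):ℝ)/2 = (1 + ((0:I):ℝ))/2
      norm_num
    | succ k =>
      rw [if_neg (by omega), show D.n + (k + 1) - D.n = k + 1 by omega]
  let C : PSub S.𝒰 (p.trans q) 0 :=
    { n := D.n + E.n
      t := fun i => if i ≤ D.n then halfI (D.t i) else halfI' (E.t (i - D.n))
      U := fun i => if i < D.n then D.U i else E.U (i - D.n)
      h0 := by
        show (if 0 ≤ D.n then halfI (D.t 0) else _) = 0
        rw [if_pos (by omega), D.h0]
        apply Subtype.ext
        show ((0:I):ℝ)/2 = ((0:I):ℝ)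
        norm_num
      h1 := fun m hm => by
        show (if m ≤ D.n then halfI (D.t m) else halfI' (E.t (m - D.n))) = 1
        rw [if_neg (by omega)]
        rw [E.h1 (m - D.n) (by omega)]
        apply Subtype.ext
        show (1 + ((1:I):ℝ))/2 = ((1:I):ℝ)
        norm_num
      mono := by
        apply monotone_nat_of_le_succ
        intro k
        show (if k ≤ D.n then halfI (D.t k) else halfI' (E.t (k - D.n))) ≤
          (if k + 1 ≤ D.n then halfI (D.t (k + 1)) else halfI' (E.t (k + 1 - D.n)))
        rcases Nat.lt_or_ge k D.n with hk | hk
        · rw [if_pos (by omega)]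
          rcases Nat.lt_or_ge (k + 1) D.n with hk1 | hk1
          · rw [if_pos (by omega)]
            show (D.t k : ℝ)/2 ≤ (D.t (k+1) : ℝ)/2
            have := D.mono (Nat.le_succ k)
            have : (D.t k : ℝ) ≤ D.t (k+1) := this
            linarith
          · have hk1' : k + 1 = D.n := by omega
            rw [if_pos (by omega)]
            show (D.t k : ℝ)/2 ≤ (D.t (k+1) : ℝ)/2
            have : (D.t k : ℝ) ≤ D.t (k+1) := D.mono (Nat.le_succ k)
            linarith
        · rcases Nat.eq_or_lt_of_le hk with hk' | hk'
          · rw [if_pos (by omega), if_neg (by omega)]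
            show (D.t k : ℝ)/2 ≤ (1 + (E.t (k + 1 - D.n) : ℝ))/2
            have h1 : (D.t k : ℝ) ≤ 1 := (D.t k).2.2
            have h2 : (0:ℝ) ≤ E.t (k + 1 - D.n) := (E.t _).2.1
            linarith
          · rw [if_neg (by omega), if_neg (by omega)]
            show (1 + (E.t (k - D.n) : ℝ))/2 ≤ (1 + (E.t (k + 1 - D.n) : ℝ))/2
            have : (E.t (k - D.n) : ℝ) ≤ E.t (k + 1 - D.n) := E.mono (by omega)
            linarith
      mem := fun i => by
        show (if i < D.n then D.U i else E.U (i - D.n)) ∈ S.𝒰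
        split_ifs
        · exact D.mem i
        · exact E.mem _
      sub := fun i => by
        rcases Nat.lt_or_ge i D.n with hi | hi
        · show (p.trans q) '' Set.Icc _ _ ⊆ (if i < D.n then D.U i else E.U (i - D.n))
          rw [if_pos hi]
          rintro _ ⟨τ, hτ, rfl⟩
          have hτ1 : (τ : ℝ) ≤ (halfI (D.t (i+1)) : ℝ) := by
            have h2 : τ ≤ (if i + 1 ≤ D.n then halfI (D.t (i+1)) else halfI' (E.t (i+1-D.n))) :=
              hτ.2
            rw [if_pos (by omega : i + 1 ≤ D.n)] at h2
            exact h2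
          have hτ0 : ((halfI (D.t i)) : ℝ) ≤ τ := by
            have h2 : (if i ≤ D.n then halfI (D.t i) else halfI' (E.t (i-D.n))) ≤ τ := hτ.1
            rw [if_pos (by omega : i ≤ D.n)] at h2
            exact h2
          have hτhalf : (τ:ℝ) ≤ 1/2 := le_trans hτ1 (halfI_le_half _)
          have key : (p.trans q) τ = p.extend (2 * τ) := by
            rw [← Path.extend_extends' (p.trans q) τ]
            exact Path.trans_extend_le p q τ.2.1 hτhalf
          rw [key]
          have h2τ : (2 * (τ:ℝ)) ∈ Set.Icc (0:ℝ) 1 := by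
            constructor
            · linarith [τ.2.1]
            · have : ((halfI (D.t (i+1))) : ℝ) = (D.t (i+1) : ℝ)/2 := rfl
              rw [this] at hτ1
              linarith [(D.t (i+1)).2.2]
          rw [p.extend_apply h2τ]
          apply D.sub i
          refine ⟨⟨2 * (τ:ℝ), h2τ⟩, ⟨?_, ?_⟩, rfl⟩
          · show (D.t i : ℝ) ≤ 2 * (τ:ℝ)
            have : ((halfI (D.t i)) : ℝ) = (D.t i : ℝ)/2 := rfl
            rw [this] at hτ0
            linarith
          · show 2 * (τ:ℝ) ≤ (D.t (i+1) : ℝ)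
            have : ((halfI (D.t (i+1))) : ℝ) = (D.t (i+1) : ℝ)/2 := rfl
            rw [this] at hτ1
            linarith
        · show (p.trans q) '' Set.Icc _ _ ⊆ (if i < D.n then D.U i else E.U (i - D.n))
          rw [if_neg (show ¬ i < D.n by omega)]
          rintro _ ⟨τ, hτ, rfl⟩
          obtain ⟨k, rfl⟩ : ∃ k, i = D.n + k := ⟨i - D.n, by omega⟩
          have hτ0 : ((halfI' (E.t k)) : ℝ) ≤ τ := by
            have h2 : (if D.n + k ≤ D.n then halfI (D.t (D.n + k))
                else halfI' (E.t (D.n + k - D.n))) ≤ τ := hτ.1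
            rw [hCt k] at h2
            exact h2
          have hτ1 : (τ : ℝ) ≤ ((halfI' (E.t (k+1))) : ℝ) := by
            have h2 : τ ≤ (if D.n + (k + 1) ≤ D.n then halfI (D.t (D.n + (k + 1)))
                else halfI' (E.t (D.n + (k + 1) - D.n))) := by
              have h3 := hτ.2
              rw [show D.n + k + 1 = D.n + (k + 1) by omega] at h3
              exact h3
            rw [hCt (k+1)] at h2
            exact h2
          have hτhalf : (1/2 : ℝ) ≤ τ := le_trans (half_le_halfI' _) hτ0
          have key : (p.trans q) τ = q.extend (2 * τ - 1) := by
            rw [← Path.extend_extends' (p.trans q) τ]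
            exact Path.trans_extend_ge p q hτhalf τ.2.2
          rw [key]
          have h2τ : (2 * (τ:ℝ) - 1) ∈ Set.Icc (0:ℝ) 1 := by
            constructor
            · linarith
            · linarith [τ.2.2]
          rw [q.extend_apply h2τ]
          have hidx : D.n + k - D.n = k := by omega
          rw [hidx]
          apply E.sub k
          refine ⟨⟨2 * (τ:ℝ) - 1, h2τ⟩, ⟨?_, ?_⟩, rfl⟩
          · show (E.t k : ℝ) ≤ 2 * (τ:ℝ) - 1
            have : ((halfI' (E.t k)) : ℝ) = (1 + (E.t k : ℝ))/2 := rfl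
            rw [this] at hτ0
            linarith
          · show 2 * (τ:ℝ) - 1 ≤ (E.t (k+1) : ℝ)
            have : ((halfI' (E.t (k+1))) : ℝ) = (1 + (E.t (k+1) : ℝ))/2 := rfl
            rw [this] at hτ1
            linarith }
  rw [← S.pprod_eq_Phi C, ← S.pprod_eq_Phi D, ← S.pprod_eq_Phi E]
  show ((List.range C.n).map _).prod = _
  rw [show C.n = D.n + E.n from rfl, List.range_add, List.map_append, List.prod_append,
    List.map_map]
  congr 1
  · -- first part equals S.pprod D
    show _ = ((List.range D.n).map _).prod
    apply congrArg
    apply List.map_congr_left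
    intro i hi
    have hi' : i < D.n := List.mem_range.mp hi
    refine Eq.trans ?_ (S.phiU_piece2 (D.mem i) p (D.t i) (D.t (i+1))
      (D.mono (Nat.le_succ i)) (D.sub i))
    apply S.phiU_congr
    · show (if i < D.n then D.U i else E.U (i - D.n)) = D.U i
      rw [if_pos hi']
    · show (p.trans q) (C.t i) = p (D.t i)
      have : C.t i = halfI (D.t i) := by
        show (if i ≤ D.n then _ else _) = _
        rw [if_pos (by omega)]
      rw [this, Path.trans_halfI]
    · show (p.trans q) (C.t (i+1)) = p (D.t (i+1))
      have : C.t (i+1) = halfI (D.t (i+1)) := by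
        show (if i + 1 ≤ D.n then _ else _) = _
        rw [if_pos (by omega)]
      rw [this, Path.trans_halfI]
    · intro τ
      show (p.trans q).extend (min (max (τ:ℝ) (C.t i)) (C.t (i+1))) =
        p.extend (min (max (2 * (τ:ℝ)) (D.t i)) (D.t (i+1)))
      have hci : ((C.t i : I) : ℝ) = (D.t i : ℝ)/2 := by
        show ((if i ≤ D.n then halfI (D.t i) else _ : I) : ℝ) = _
        rw [if_pos (by omega)]; rfl
      have hci1 : ((C.t (i+1) : I) : ℝ) = (D.t (i+1) : ℝ)/2 := by
        show ((if i + 1 ≤ D.n then halfI (D.t (i+1)) else _ : I) : ℝ) = _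
        rw [if_pos (by omega)]; rfl
      rw [hci, hci1]
      have hc0 : (0:ℝ) ≤ min (max (τ:ℝ) ((D.t i : ℝ)/2)) ((D.t (i+1) : ℝ)/2) := by
        have : (0:ℝ) ≤ (D.t i : ℝ)/2 := by linarith [(D.t i).2.1]
        exact le_trans this (le_min (le_max_right _ _) (by
          have : (D.t i : ℝ) ≤ (D.t (i+1) : ℝ) := D.mono (Nat.le_succ i)
          linarith))
      have hchalf : min (max (τ:ℝ) ((D.t i : ℝ)/2)) ((D.t (i+1) : ℝ)/2) ≤ 1/2 := by
        have : (D.t (i+1) : ℝ) ≤ 1 := (D.t (i+1)).2.2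
        have := min_le_right (max (τ:ℝ) ((D.t i : ℝ)/2)) ((D.t (i+1) : ℝ)/2)
        linarith
      rw [Path.trans_extend_le p q hc0 hchalf]
      congr 1
      rw [show (2:ℝ) * min (max (τ:ℝ) ((D.t i : ℝ)/2)) ((D.t (i+1) : ℝ)/2) =
        2 * min (max (τ:ℝ) ((D.t i : ℝ)/2)) ((D.t (i+1) : ℝ)/2) + 0 by ring,
        affine_minmax _ _ _ _ _ (by norm_num : (0:ℝ) < 2)]
      norm_num
      rw [show (2:ℝ) * ((D.t i : ℝ)/2) = (D.t i : ℝ) by ring,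
        show (2:ℝ) * ((D.t (i+1) : ℝ)/2) = (D.t (i+1) : ℝ) by ring]
      try rfl
  · -- second part equals S.pprod E
    show _ = ((List.range E.n).map _).prod
    apply congrArg
    apply List.map_congr_left
    intro k hk
    have hk' : k < E.n := List.mem_range.mp hk
    show S.phiU _ ((p.trans q).piece (C.t (D.n + k)) (C.t (D.n + k + 1)) _) _ = _
    refine Eq.trans ?_ (S.phiU_piece2' (E.mem k) q (E.t k) (E.t (k+1))
      (E.mono (Nat.le_succ k)) (E.sub k))
    apply S.phiU_congr
    · show (if D.n + k < D.n then D.U _ else E.U (D.n + k - D.n)) = E.U k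
      rw [if_neg (by omega), show D.n + k - D.n = k by omega]
    · show (p.trans q) (C.t (D.n + k)) = q (E.t k)
      have : C.t (D.n + k) = halfI' (E.t k) := hCt k
      rw [this, Path.trans_halfI']
    · show (p.trans q) (C.t (D.n + k + 1)) = q (E.t (k + 1))
      have : C.t (D.n + k + 1) = halfI' (E.t (k + 1)) := by
        rw [show D.n + k + 1 = D.n + (k + 1) by omega]; exact hCt (k+1)
      rw [this, Path.trans_halfI']
    · intro τ
      show (p.trans q).extend (min (max (τ:ℝ) (C.t (D.n + k))) (C.t (D.n + k + 1))) =
        q.extend (min (max (2 * (τ:ℝ) - 1) (E.t k)) (E.t (k+1)))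
      have hck : ((C.t (D.n + k) : I) : ℝ) = (1 + (E.t k : ℝ))/2 := by
        show (((if D.n + k ≤ D.n then halfI (D.t (D.n + k))
          else halfI' (E.t (D.n + k - D.n))) : I) : ℝ) = _
        rw [hCt k]; rfl
      have hck1 : ((C.t (D.n + k + 1) : I) : ℝ) = (1 + (E.t (k+1) : ℝ))/2 := by
        show (((if D.n + k + 1 ≤ D.n then halfI (D.t (D.n + k + 1))
          else halfI' (E.t (D.n + k + 1 - D.n))) : I) : ℝ) = _
        rw [if_neg (by omega), show D.n + k + 1 - D.n = k + 1 by omega]; rfl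
      rw [hck, hck1]
      have hmem0 : (0:ℝ) ≤ E.t k := (E.t k).2.1
      have hmono : (E.t k : ℝ) ≤ E.t (k+1) := E.mono (Nat.le_succ k)
      have hc0 : (1/2:ℝ) ≤ min (max (τ:ℝ) ((1 + (E.t k : ℝ))/2)) ((1 + (E.t (k+1) : ℝ))/2) := by
        apply le_min
        · apply le_trans _ (le_max_right _ _)
          linarith
        · linarith
      have hc1 : min (max (τ:ℝ) ((1 + (E.t k : ℝ))/2)) ((1 + (E.t (k+1) : ℝ))/2) ≤ 1 := by
        have := min_le_right (max (τ:ℝ) ((1 + (E.t k : ℝ))/2)) ((1 + (E.t (k+1) : ℝ))/2)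
        have h1 : (E.t (k+1) : ℝ) ≤ 1 := (E.t (k+1)).2.2
        linarith
      rw [Path.trans_extend_ge p q hc0 hc1]
      congr 1
      rw [show (2:ℝ) * min (max (τ:ℝ) ((1 + (E.t k : ℝ))/2)) ((1 + (E.t (k+1) : ℝ))/2) - 1 =
        2 * min (max (τ:ℝ) ((1 + (E.t k : ℝ))/2)) ((1 + (E.t (k+1) : ℝ))/2) + (-1) by ring,
        affine_minmax _ _ _ _ _ (by norm_num : (0:ℝ) < 2)]
      norm_num
      rw [show (2:ℝ) * ((1 + (E.t k : ℝ))/2) + -1 = (E.t k : ℝ) by ring,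
        show (2:ℝ) * ((1 + (E.t (k+1) : ℝ))/2) + -1 = (E.t (k+1) : ℝ) by ring,
        show (2:ℝ) * (τ:ℝ) + -1 = 2 * (τ:ℝ) - 1 by ring]

end GlueData

namespace GlueData

open NCocycle

variable {X : Type} [TopologicalSpace X] {b : X} {G : Type} [Group G] (S : GlueData X b G)

theorem Phi_homotopy_inv {x y : X} (p q : Path x y) (F : p.Homotopy q) :
    S.Phi p = S.Phi q := by
  classical
  have hFc : Continuous ⇑F := F.continuous
  obtain ⟨t, ht0, hmono, ⟨N, hN⟩, hsq⟩ :=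
    exists_monotone_Icc_subset_open_cover_unitInterval_prod_self (ι := {U // U ∈ S.𝒰})
      (c := fun U => ⇑F ⁻¹' U.1) (fun U => (S.hopen U.1 U.2).preimage hFc)
      (fun z _ => by
        obtain ⟨U, hU, hm⟩ := Set.sUnion_eq_univ_iff.mp S.hcover (F z)
        exact Set.mem_iUnion.mpr ⟨⟨U, hU⟩, hm⟩)
  choose Ug hUg using hsq
  let pj : ℝ → I := Set.projIcc (0:ℝ) 1 zero_le_one
  let Fe : ℝ × ℝ → X := fun z => F (pj z.1, pj z.2)
  have hFe : Continuous Fe := hFc.comp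
    ((continuous_projIcc.comp continuous_fst).prodMk (continuous_projIcc.comp continuous_snd))
  have hFeI : ∀ (sg : I) (r : ℝ) (hr : r ∈ Set.Icc (0:ℝ) 1), Fe ((sg:ℝ), r) = F (sg, ⟨r, hr⟩) := by
    intro sg r hr
    show F (pj sg, pj r) = _
    rw [show pj (sg:ℝ) = sg from Set.projIcc_val zero_le_one sg,
      show pj r = ⟨r, hr⟩ from Set.projIcc_of_mem zero_le_one hr]
  have step : ∀ j, S.Phi (F.eval (t j)) = S.Phi (F.eval (t (j + 1))) := by
    intro j
    have hs : t j ≤ t (j + 1) := hmono (Nat.le_succ j)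
    have hs' : ((t j : I) : ℝ) ≤ t (j + 1) := hs
    set s₀ := t j with hs₀
    set s₁ := t (j + 1) with hs₁
    set P₀ := F.eval s₀ with hP₀
    set P₁ := F.eval s₁ with hP₁
    have hti : ∀ i, ((t i : I):ℝ) ≤ ((t (i+1) : I):ℝ) := fun i => hmono (Nat.le_succ i)
    have hsquare : ∀ i, Set.Icc s₀ s₁ ×ˢ Set.Icc (t i) (t (i + 1)) ⊆ ⇑F ⁻¹' (Ug j i).1 :=
      fun i => hUg j i
    have hFmem : ∀ i (sg τ : I), sg ∈ Set.Icc s₀ s₁ → τ ∈ Set.Icc (t i) (t (i + 1)) →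
        F (sg, τ) ∈ (Ug j i).1 := fun i sg τ hsg hτ => hsquare i (Set.mk_mem_prod hsg hτ)
    have hcomb : ∀ sg : I, (1 - (sg:ℝ)) * s₀ + sg * s₁ ∈ Set.Icc ((s₀:I):ℝ) s₁ := by
      intro sg
      constructor
      · nlinarith [sg.2.1, sg.2.2, hs']
      · nlinarith [sg.2.1, sg.2.2, hs']
    have hcomb01 : ∀ sg : I, (1 - (sg:ℝ)) * s₀ + sg * s₁ ∈ Set.Icc (0:ℝ) 1 := fun sg =>
      ⟨le_trans s₀.2.1 (hcomb sg).1, le_trans (hcomb sg).2 s₁.2.2⟩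
    have hFeR : ∀ i, ∀ z : ℝ × ℝ, z.1 ∈ Set.Icc ((s₀:I):ℝ) s₁ →
        z.2 ∈ Set.Icc ((t i : I):ℝ) (t (i+1)) → Fe z ∈ (Ug j i).1 := by
      intro i z h1 h2
      have hz1 : pj z.1 ∈ Set.Icc s₀ s₁ := by
        constructor
        · have := monotone_projIcc zero_le_one h1.1
          rwa [Set.projIcc_val zero_le_one s₀] at this
        · have := monotone_projIcc zero_le_one h1.2
          rwa [Set.projIcc_val zero_le_one s₁] at this
      have hz2 : pj z.2 ∈ Set.Icc (t i) (t (i+1)) := by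
        constructor
        · have := monotone_projIcc zero_le_one h2.1
          rwa [Set.projIcc_val zero_le_one (t i)] at this
        · have := monotone_projIcc zero_le_one h2.2
          rwa [Set.projIcc_val zero_le_one (t (i+1))] at this
      exact hFmem i _ _ hz1 hz2
    -- vertical paths
    let v : ∀ i : ℕ, Path (P₀ (t i)) (P₁ (t i)) := fun i =>
      { toFun := fun sg => Fe ((1 - (sg:ℝ)) * s₀ + sg * s₁, t i)
        continuous_toFun := hFe.comp (by fun_prop)
        source' := by
          show Fe ((1 - ((0:I):ℝ)) * s₀ + ((0:I):ℝ) * s₁, (t i : ℝ)) = P₀ (t i)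
          rw [show (1 - ((0:I):ℝ)) * s₀ + ((0:I):ℝ) * s₁ = ((s₀:I):ℝ) by norm_num]
          rw [hFeI s₀ (t i) (t i).2]
          rfl
        target' := by
          show Fe ((1 - ((1:I):ℝ)) * s₀ + ((1:I):ℝ) * s₁, (t i : ℝ)) = P₁ (t i)
          rw [show (1 - ((1:I):ℝ)) * s₀ + ((1:I):ℝ) * s₁ = ((s₁:I):ℝ) by norm_num]
          rw [hFeI s₁ (t i) (t i).2]
          rfl }
    have hv_apply : ∀ i (sg : I), v i sg = Fe ((1 - (sg:ℝ)) * s₀ + sg * s₁, t i) := fun i sg => rfl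
    have hP₀sub : ∀ i, P₀ '' Set.Icc (t i) (t (i+1)) ⊆ (Ug j i).1 := by
      rintro i _ ⟨τ, hτ, rfl⟩
      exact hFmem i s₀ τ ⟨le_rfl, hs⟩ hτ
    have hP₁sub : ∀ i, P₁ '' Set.Icc (t i) (t (i+1)) ⊆ (Ug j i).1 := by
      rintro i _ ⟨τ, hτ, rfl⟩
      exact hFmem i s₁ τ ⟨hs, le_rfl⟩ hτ
    have hvsub : ∀ i, Set.range (v i) ⊆ (Ug j i).1 := by
      rintro i _ ⟨sg, rfl⟩
      exact hFeR i _ (hcomb sg) ⟨le_rfl, hmono (Nat.le_succ i)⟩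
    have hvsub' : ∀ i, Set.range (v (i + 1)) ⊆ (Ug j i).1 := by
      rintro i _ ⟨sg, rfl⟩
      exact hFeR i _ (hcomb sg) ⟨(hmono (Nat.le_succ i) : ((t i : I):ℝ) ≤ t (i+1)), le_rfl⟩
    -- subdivisions of the two horizontal paths
    let D₀ : PSub S.𝒰 P₀ 0 := ⟨N, t, fun i => (Ug j i).1, ht0, hN, hmono,
      fun i => (Ug j i).2, hP₀sub⟩
    let D₁ : PSub S.𝒰 P₁ 0 := ⟨N, t, fun i => (Ug j i).1, ht0, hN, hmono,
      fun i => (Ug j i).2, hP₁sub⟩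
    let fP₀ : ℕ → G := fun i => S.phiU (Ug j i).2
      (P₀.piece (t i) (t (i+1)) (hmono (Nat.le_succ i)))
      ((P₀.piece_range _ _ _).trans (hP₀sub i))
    let fP₁ : ℕ → G := fun i => S.phiU (Ug j i).2
      (P₁.piece (t i) (t (i+1)) (hmono (Nat.le_succ i)))
      ((P₁.piece_range _ _ _).trans (hP₁sub i))
    let gv : ℕ → G := fun i => S.phiU (Ug j i).2 (v i) (hvsub i)
    -- the per-square relation
    have sq : ∀ i, fP₀ i * S.phiU (Ug j i).2 (v (i+1)) (hvsub' i) =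
        gv i * fP₁ i := by
      intro i
      have hA : Set.range ((P₀.piece (t i) (t (i+1)) (hmono (Nat.le_succ i))).trans (v (i+1)))
          ⊆ (Ug j i).1 := by
        rw [Path.trans_range]
        exact Set.union_subset ((P₀.piece_range _ _ _).trans (hP₀sub i)) (hvsub' i)
      have hB : Set.range ((v i).trans (P₁.piece (t i) (t (i+1)) (hmono (Nat.le_succ i))))
          ⊆ (Ug j i).1 := by
        rw [Path.trans_range]
        exact Set.union_subset (hvsub i) ((P₁.piece_range _ _ _).trans (hP₁sub i))
      rw [← S.phiU_mul (Ug j i).2 _ _ hA _ _, ← S.phiU_mul (Ug j i).2 _ _ hB _ _]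
      -- the square homotopy
      have hex : ∃ Fh : ((P₀.piece (t i) (t (i+1)) (hmono (Nat.le_succ i))).trans
            (v (i+1))).Homotopy ((v i).trans (P₁.piece (t i) (t (i+1)) (hmono (Nat.le_succ i)))),
          Set.range Fh ⊆ Fe '' (Set.Icc ((s₀:I):ℝ) s₁ ×ˢ Set.Icc ((t i : I):ℝ) (t (i+1))) := by
        refine exists_comp_homotopy Fe hFe _ _
          (fun τ => if (τ:ℝ) ≤ 1/2 then (((s₀:I):ℝ), min (max (2*(τ:ℝ)) (t i)) (t (i+1)))
            else ((1 - (2*(τ:ℝ)-1)) * s₀ + (2*(τ:ℝ)-1) * s₁, ((t (i+1) : I):ℝ)))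
          (fun τ => if (τ:ℝ) ≤ 1/2 then ((1 - (2*(τ:ℝ))) * s₀ + (2*(τ:ℝ)) * s₁, ((t i : I):ℝ))
            else (((s₁:I):ℝ), min (max (2*(τ:ℝ)-1) (t i)) (t (i+1))))
          ?_ ?_ ?_ ?_ ?_ ?_ _ ((convex_Icc _ _).prod (convex_Icc _ _)) ?_ ?_
        · apply Continuous.if_le (by fun_prop) (by fun_prop) (by fun_prop) continuous_const
          intro τ hτ
          rw [hτ]
          have e1 : (2 * (1/2 : ℝ)) = 1 := by norm_num
          have e2 : (2 * (1/2 : ℝ) - 1) = 0 := by norm_num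
          rw [e2, e1]
          apply Prod.ext
          · show ((s₀:I):ℝ) = (1 - 0) * s₀ + 0 * s₁
            ring
          · show min (max (1:ℝ) (t i)) (t (i+1)) = ((t (i+1) : I):ℝ)
            rw [max_eq_left (t i).2.2, min_eq_right (t (i+1)).2.2]
        · apply Continuous.if_le (by fun_prop) (by fun_prop) (by fun_prop) continuous_const
          intro τ hτ
          rw [hτ]
          have e1 : (2 * (1/2 : ℝ)) = 1 := by norm_num
          have e2 : (2 * (1/2 : ℝ) - 1) = 0 := by norm_num
          rw [e2, e1]
          apply Prod.ext
          · show (1 - 1) * (s₀:ℝ) + 1 * s₁ = ((s₁:I):ℝ)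
            ring
          · show ((t i : I):ℝ) = min (max (0:ℝ) (t i)) (t (i+1))
            rw [max_eq_right (t i).2.1, min_eq_left (hti i)]
        · -- f 0 = g 0
          beta_reduce
          rw [if_pos (by norm_num : ((0:I):ℝ) ≤ 1/2), if_pos (by norm_num : ((0:I):ℝ) ≤ 1/2)]
          apply Prod.ext
          · show ((s₀:I):ℝ) = (1 - 2*((0:I):ℝ)) * s₀ + 2*((0:I):ℝ) * s₁
            norm_num
          · show min (max (2*((0:I):ℝ)) (t i)) (t (i+1)) = ((t i : I):ℝ)
            rw [show (2*((0:I):ℝ)) = (0:ℝ) by norm_num, max_eq_right (t i).2.1,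
              min_eq_left (hti i)]
        · -- f 1 = g 1
          beta_reduce
          rw [if_neg (by norm_num : ¬ (((1:I):ℝ) ≤ 1/2)),
            if_neg (by norm_num : ¬ (((1:I):ℝ) ≤ 1/2))]
          apply Prod.ext
          · show (1 - (2*((1:I):ℝ)-1)) * s₀ + (2*((1:I):ℝ)-1) * s₁ = ((s₁:I):ℝ)
            norm_num
          · show ((t (i+1) : I):ℝ) = min (max (2*((1:I):ℝ)-1) (t i)) (t (i+1))
            rw [show (2*((1:I):ℝ)-1) = (1:ℝ) by norm_num, max_eq_left (t i).2.2,
              min_eq_right (t (i+1)).2.2]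
        · -- A τ = Fe (f τ)
          intro τ
          beta_reduce
          rw [Path.trans_apply]
          split_ifs with h
          · rw [Path.piece_apply]
            have hcl0 : (0:ℝ) ≤ min (max (2*(τ:ℝ)) (t i)) (t (i+1)) :=
              le_trans (t i).2.1 (le_min (le_max_right _ _) (hmono (Nat.le_succ i)))
            have hcl1 : min (max (2*(τ:ℝ)) (t i)) (t (i+1)) ≤ 1 :=
              le_trans (min_le_right _ _) (t (i+1)).2.2
            rw [P₀.extend_apply ⟨hcl0, hcl1⟩]
            rw [hFeI s₀ _ ⟨hcl0, hcl1⟩]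
            rfl
          · rfl
        · -- B τ = Fe (g τ)
          intro τ
          beta_reduce
          rw [Path.trans_apply]
          split_ifs with h
          · rfl
          · rw [Path.piece_apply]
            have hcl0 : (0:ℝ) ≤ min (max (2*(τ:ℝ)-1) (t i)) (t (i+1)) :=
              le_trans (t i).2.1 (le_min (le_max_right _ _) (hmono (Nat.le_succ i)))
            have hcl1 : min (max (2*(τ:ℝ)-1) (t i)) (t (i+1)) ≤ 1 :=
              le_trans (min_le_right _ _) (t (i+1)).2.2
            rw [P₁.extend_apply ⟨hcl0, hcl1⟩]
            rw [hFeI s₁ _ ⟨hcl0, hcl1⟩]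
            rfl
        · -- f τ ∈ R
          intro τ
          beta_reduce
          split_ifs with h
          · exact ⟨⟨le_rfl, hs'⟩, ⟨le_min (le_max_right _ _) (hmono (Nat.le_succ i)),
              min_le_right _ _⟩⟩
          · push_neg at h
            refine ⟨⟨?_, ?_⟩, ⟨hti i, le_rfl⟩⟩
            · show ((s₀:I):ℝ) ≤ (1 - (2*(τ:ℝ)-1)) * s₀ + (2*(τ:ℝ)-1) * s₁
              nlinarith [τ.2.2, hs', h]
            · show (1 - (2*(τ:ℝ)-1)) * (s₀:ℝ) + (2*(τ:ℝ)-1) * s₁ ≤ ((s₁:I):ℝ)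
              nlinarith [τ.2.2, hs', h]
        · -- g τ ∈ R
          intro τ
          beta_reduce
          split_ifs with h
          · refine ⟨⟨?_, ?_⟩, ⟨le_rfl, hti i⟩⟩
            · show ((s₀:I):ℝ) ≤ (1 - 2*(τ:ℝ)) * s₀ + 2*(τ:ℝ) * s₁
              nlinarith [τ.2.1, hs', h]
            · show (1 - 2*(τ:ℝ)) * (s₀:ℝ) + 2*(τ:ℝ) * s₁ ≤ ((s₁:I):ℝ)
              nlinarith [τ.2.1, hs', h]
          · exact ⟨⟨hs', le_rfl⟩, ⟨le_min (le_max_right _ _) (hmono (Nat.le_succ i)),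
              min_le_right _ _⟩⟩
      obtain ⟨Fh, hFh⟩ := hex
      exact S.phiU_hom (Ug j i).2 Fh
        (hFh.trans (by rintro _ ⟨z, hz, rfl⟩; exact hFeR i z hz.1 hz.2)) hA hB
    -- vertical correction identification across squares
    have hvmatch : ∀ i, S.phiU (Ug j i).2 (v (i+1)) (hvsub' i) = gv (i+1) := by
      intro i
      exact S.phiU_indep (Ug j i).2 (Ug j (i+1)).2 (v (i+1)) (hvsub' i) (hvsub (i+1))
    -- telescoping
    have claim : ∀ k, ((List.range k).map fP₀).prod =
        gv 0 * ((List.range k).map fP₁).prod * (gv k)⁻¹ := by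
      intro k
      induction k with
      | zero => simp
      | succ k ih =>
        rw [listProd_succ, listProd_succ, ih]
        have hstep : fP₀ k = gv k * fP₁ k * (gv (k+1))⁻¹ := by
          have := sq k
          rw [hvmatch k] at this
          rw [← this]
          group
        rw [hstep]
        group
    have hend0 : gv 0 = 1 := by
      apply S.phiU_const
      intro sg
      show Fe ((1 - (sg:ℝ)) * s₀ + sg * s₁, (t 0 : ℝ)) = P₀ (t 0)
      rw [hFeI ⟨_, hcomb01 sg⟩ (t 0) (t 0).2]
      show F (_, t 0) = P₀ (t 0)
      rw [ht0]
      rw [F.source]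
      show x = F.eval s₀ 0
      rw [show F.eval s₀ 0 = F (s₀, 0) from rfl, F.source]
    have hendN : gv N = 1 := by
      apply S.phiU_const
      intro sg
      show Fe ((1 - (sg:ℝ)) * s₀ + sg * s₁, (t N : ℝ)) = P₀ (t N)
      rw [hFeI ⟨_, hcomb01 sg⟩ (t N) (t N).2]
      show F (_, t N) = P₀ (t N)
      rw [hN N le_rfl]
      rw [F.target]
      show y = F.eval s₀ 1
      rw [show F.eval s₀ 1 = F (s₀, 1) from rfl, F.target]
    have hD₀ : S.pprod D₀ = ((List.range N).map fP₀).prod := rfl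
    have hD₁ : S.pprod D₁ = ((List.range N).map fP₁).prod := rfl
    rw [← S.pprod_eq_Phi D₀, ← S.pprod_eq_Phi D₁, hD₀, hD₁, claim N, hend0, hendN]
    group
  have chain : ∀ j, S.Phi (F.eval (t 0)) = S.Phi (F.eval (t j)) := by
    intro j
    induction j with
    | zero => rfl
    | succ j ih => rw [ih, step j]
  have hfin := chain N
  rw [ht0, hN N le_rfl, Path.Homotopy.eval_zero, Path.Homotopy.eval_one] at hfin
  exact hfin

end GlueData

namespace GlueData

open NCocycle

variable {X : Type} [TopologicalSpace X] {b : X} {G : Type} [Group G] (S : GlueData X b G)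

/-- The glued cocycle on the whole space. -/
noncomputable def w : NCocycle (Set.univ : Set X) {b} G where
  toFun p _ := S.Phi p
  triv := by
    intro x y p hp hb
    have hx : x = b := Set.mem_singleton_iff.mp (hb ⟨0, p.source⟩)
    have hy : y = b := Set.mem_singleton_iff.mp (hb ⟨1, p.target⟩)
    have hU := S.Uof_mem b
    have hpU : Set.range p ⊆ S.Uof b := hb.trans (Set.singleton_subset_iff.mpr (S.mem_Uof b))
    have ha1 : S.aG x (S.Uof b) hU = 1 := by rw [hx]; exact S.aG_b _ hU
    have ha2 : S.aG y (S.Uof b) hU = 1 := by rw [hy]; exact S.aG_b _ hU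
    show S.Phi p = 1
    rw [S.Phi_eq_phiU hU p hpU, phiU, ha1, ha2, (S.u _ hU).triv p hpU hb]
    simp
  homotopy_inv := fun p q F _ _ _ => S.Phi_homotopy_inv p q F
  mul := fun p q _ _ _ => S.Phi_trans p q

theorem w_res (U : Set X) (hU : U ∈ S.𝒰) :
    Cohom (res (Set.subset_univ U) subset_rfl S.w) (S.u U hU) := by
  classical
  refine ⟨fun z => if z ∈ U then (S.aG z U hU)⁻¹ else 1, ?_, ?_⟩
  · intro z hz
    rw [Set.mem_singleton_iff] at hz; subst hz
    show (if z ∈ U then (S.aG z U hU)⁻¹ else 1) = 1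
    rw [if_pos (S.hmem U hU), S.aG_b, inv_one]
  · intro x y p hp
    have hx : x ∈ U := hp ⟨0, p.source⟩
    have hy : y ∈ U := hp ⟨1, p.target⟩
    show (S.u U hU).toFun p hp = (if x ∈ U then (S.aG x U hU)⁻¹ else 1) *
      (res (Set.subset_univ U) subset_rfl S.w).toFun p hp *
      ((if y ∈ U then (S.aG y U hU)⁻¹ else 1))⁻¹
    rw [if_pos hx, if_pos hy]
    have hres : (res (Set.subset_univ U) subset_rfl S.w).toFun p hp = S.phiU hU p hp :=
      S.Phi_eq_phiU hU p hp
    rw [hres, phiU]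
    group

end GlueData

/-- A cocycle on the whole space is determined on a path by its values on the pieces
of any subdivision. -/
theorem NCocycle.toFun_subdiv {X : Type} [TopologicalSpace X] {G : Type} [Group G] {b : X}
    (w : NCocycle (Set.univ : Set X) {b} G) {𝒰 : Set (Set X)} {x y : X} {p : Path x y}
    (D : PSub 𝒰 p 0) :
    w.toFun p (Set.subset_univ _) =
      ((List.range D.n).map fun i =>
        w.toFun (p.piece (D.t i) (D.t (i+1)) (D.mono (Nat.le_succ i)))
          (Set.subset_univ _)).prod := by
  have key : ∀ m, w.toFun (p.piece (D.t 0) (D.t m) (D.mono (Nat.zero_le m)))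
      (Set.subset_univ _)
      = ((List.range m).map fun i =>
        w.toFun (p.piece (D.t i) (D.t (i+1)) (D.mono (Nat.le_succ i)))
          (Set.subset_univ _)).prod := by
    intro m
    induction m with
    | zero =>
      simp only [List.range_zero, List.map_nil, List.prod_nil]
      apply w.toFun_const
      intro τ
      rw [Path.piece_apply, min_eq_right (le_max_right _ _), p.extend_extends' (D.t 0)]
    | succ m ih =>
      obtain ⟨Fh, _⟩ := exists_piece_split_homotopy p (D.t 0) (D.t m) (D.t (m+1))
        (D.mono (Nat.zero_le m)) (D.mono (Nat.le_succ m))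
      rw [w.homotopy_inv _ _ Fh (Set.subset_univ _) (Set.subset_univ _) (Set.subset_univ _),
        w.mul _ _ (Set.subset_univ _) (Set.subset_univ _) (Set.subset_univ _), ih,
        GlueData.listProd_succ]
  have hfin := key D.n
  rw [← hfin]
  have hx0 : x = p (D.t 0) := by rw [D.h0, p.source]
  have hy0 : y = p (D.t D.n) := by rw [D.h1 D.n le_rfl, p.target]
  apply w.toFun_congr p _ hx0 hy0
  intro τ
  rw [Path.piece_apply, D.h0, D.h1 D.n le_rfl]
  rw [show ((0:I):ℝ) = (0:ℝ) from rfl, show ((1:I):ℝ) = (1:ℝ) from rfl,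
    max_eq_left τ.2.1, min_eq_left τ.2.2, p.extend_extends' τ]

open NCocycle in
/-- Let 𝒰 be an open cover of X by path-connected sets containing b,
with all pairwise and triple intersections path-connected. A family of cohomology classes
h_U ∈ H¹(U,b;G) comes from a (necessarily unique) class in H¹(X,b;G) if and only if the
restrictions of h_U and h_V to U ∩ V agree for all U, V ∈ 𝒰. -/
theorem statement7 (X : Type) [TopologicalSpace X] (b : X) (G : Type) [Group G]
    (𝒰 : Set (Set X))
    (hopen : ∀ U ∈ 𝒰, IsOpen U) (hcover : ⋃₀ 𝒰 = Set.univ)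
    (hconn : ∀ U ∈ 𝒰, IsPathConnected U) (hmem : ∀ U ∈ 𝒰, b ∈ U)
    (hpair : ∀ U ∈ 𝒰, ∀ V ∈ 𝒰, IsPathConnected (U ∩ V))
    (htriple : ∀ U ∈ 𝒰, ∀ V ∈ 𝒰, ∀ W ∈ 𝒰, IsPathConnected (U ∩ V ∩ W))
    (h : ∀ U : Set X, U ∈ 𝒰 → H1 U {b} G) :
    ((∃ H : H1 (Set.univ : Set X) {b} G,
        ∀ (U : Set X) (hU : U ∈ 𝒰),
          H1res (Set.subset_univ U) subset_rfl H = h U hU) ↔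
      (∀ (U : Set X) (hU : U ∈ 𝒰) (V : Set X) (hV : V ∈ 𝒰),
          H1res Set.inter_subset_left subset_rfl (h U hU)
            = H1res Set.inter_subset_right subset_rfl (h V hV))) ∧
    (∀ H H' : H1 (Set.univ : Set X) {b} G,
      (∀ (U : Set X) (hU : U ∈ 𝒰), H1res (Set.subset_univ U) subset_rfl H = h U hU) →
      (∀ (U : Set X) (hU : U ∈ 𝒰), H1res (Set.subset_univ U) subset_rfl H' = h U hU) →
      H = H') := by
  
  classical
  have hpair' : ∀ U ∈ 𝒰, ∀ V ∈ 𝒰, IsPathConnected (U ∩ V) := hpair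
  -- choose representatives of the given classes
  have hrep : ∀ U (hU : U ∈ 𝒰), ∃ u0 : NCocycle U {b} G, Quot.mk _ u0 = h U hU :=
    fun U hU => Quot.exists_rep (h U hU)
  choose u0 hu0 using hrep
  constructor
  · constructor
    · -- restrictions of a common class agree on intersections
      rintro ⟨H, hH⟩ U hU V hV
      obtain ⟨w0, rfl⟩ := Quot.exists_rep H
      rw [← hH U hU, ← hH V hV]
      rfl
    · -- gluing
      intro hRHS
      have compat : ∀ U (hU : U ∈ 𝒰) V (hV : V ∈ 𝒰),
          Cohom (res Set.inter_subset_left subset_rfl (u0 U hU))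
            (res Set.inter_subset_right subset_rfl (u0 V hV)) := by
        intro U hU V hV
        have hcomp := hRHS U hU V hV
        rw [← hu0 U hU, ← hu0 V hV] at hcomp
        exact (mk_eq_mk_iff _ _).mp hcomp
      let S : GlueData X b G := ⟨𝒰, hopen, hcover, hconn, hmem, htriple, u0, compat⟩
      refine ⟨Quot.mk _ S.w, ?_⟩
      intro U hU
      rw [← hu0 U hU]
      exact Quot.sound (S.w_res U hU)
  · -- uniqueness
    intro H H' hH hH'
    obtain ⟨w0, rfl⟩ := Quot.exists_rep H
    obtain ⟨w1, rfl⟩ := Quot.exists_rep H'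
    apply Quot.sound
    have hUres : ∀ U (hU : U ∈ 𝒰), Cohom (res (Set.subset_univ U) subset_rfl w0)
        (res (Set.subset_univ U) subset_rfl w1) := by
      intro U hU
      have hcomp := (hH U hU).trans (hH' U hU).symm
      exact (mk_eq_mk_iff _ _).mp hcomp
    choose cU hcU using hUres
    have hUof : ∀ z : X, ∃ U ∈ 𝒰, z ∈ U := Set.sUnion_eq_univ_iff.mp hcover
    choose Uz hUz1 hUz2 using hUof
    -- the comparison cochains are determined by paths from the basepoint
    have hdet : ∀ U (hU : U ∈ 𝒰) (z : X) (γ : Path b z), Set.range γ ⊆ U →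
        cU U hU z = (w1.toFun γ (Set.subset_univ _))⁻¹ * w0.toFun γ (Set.subset_univ _) := by
      intro U hU z γ hγ
      have hrel : w1.toFun γ (Set.subset_univ _) =
          cU U hU b * w0.toFun γ (Set.subset_univ _) * (cU U hU z)⁻¹ := (hcU U hU).2 γ hγ
      rw [(hcU U hU).1 b rfl, one_mul] at hrel
      rw [hrel]; group
    have hagree : ∀ U (hU : U ∈ 𝒰) V (hV : V ∈ 𝒰) (z : X), z ∈ U ∩ V →
        cU U hU z = cU V hV z := by
      intro U hU V hV z hz
      have hb2 : b ∈ U ∩ V := ⟨hmem U hU, hmem V hV⟩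
      obtain ⟨γ, hγ⟩ := (hpair' U hU V hV).joinedIn b hb2 z hz
      have hγr := Set.range_subset_iff.mpr hγ
      rw [hdet U hU z γ (fun t ht => (hγr ht).1), hdet V hV z γ (fun t ht => (hγr ht).2)]
    -- the glued global cochain
    refine ⟨fun z => cU (Uz z) (hUz1 z) z, ?_, ?_⟩
    · intro z hz
      rw [Set.mem_singleton_iff] at hz; subst hz
      show cU (Uz z) (hUz1 z) z = 1
      exact (hcU (Uz z) (hUz1 z)).1 z rfl
    · intro x y p hp
      show w1.toFun p hp = cU (Uz x) (hUz1 x) x * w0.toFun p hp * (cU (Uz y) (hUz1 y) y)⁻¹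
      -- the relation for a path inside a single member of the cover
      have hsmall : ∀ U (hU : U ∈ 𝒰) (x' y' : X) (γ : Path x' y'), Set.range γ ⊆ U →
          w1.toFun γ (Set.subset_univ _) = cU (Uz x') (hUz1 x') x' *
            w0.toFun γ (Set.subset_univ _) * (cU (Uz y') (hUz1 y') y')⁻¹ := by
        intro U hU x' y' γ hγ
        have hx' : x' ∈ U := hγ ⟨0, γ.source⟩
        have hy' : y' ∈ U := hγ ⟨1, γ.target⟩
        have h1 : cU (Uz x') (hUz1 x') x' = cU U hU x' :=
          hagree (Uz x') (hUz1 x') U hU x' ⟨hUz2 x', hx'⟩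
        have h2 : cU (Uz y') (hUz1 y') y' = cU U hU y' :=
          hagree (Uz y') (hUz1 y') U hU y' ⟨hUz2 y', hy'⟩
        have hrel : w1.toFun γ (Set.subset_univ _) =
            cU U hU x' * w0.toFun γ (Set.subset_univ _) * (cU U hU y')⁻¹ := (hcU U hU).2 γ hγ
        rw [h1, h2, hrel]
      -- subdivide the path
      obtain D := Classical.choice (exists_psub 𝒰 hopen hcover p)
      have hw0 := w0.toFun_subdiv D
      have hw1 := w1.toFun_subdiv D
      have htel : ∀ m, ((List.range m).map fun i =>
          w1.toFun (p.piece (D.t i) (D.t (i+1)) (D.mono (Nat.le_succ i)))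
            (Set.subset_univ _)).prod =
          cU (Uz (p (D.t 0))) (hUz1 _) (p (D.t 0)) *
          ((List.range m).map fun i =>
            w0.toFun (p.piece (D.t i) (D.t (i+1)) (D.mono (Nat.le_succ i)))
              (Set.subset_univ _)).prod *
          (cU (Uz (p (D.t m))) (hUz1 _) (p (D.t m)))⁻¹ := by
        intro m
        induction m with
        | zero => simp
        | succ m ih =>
          rw [GlueData.listProd_succ, GlueData.listProd_succ, ih,
            hsmall (D.U m) (D.mem m) _ _ (p.piece (D.t m) (D.t (m+1)) (D.mono (Nat.le_succ m)))
              ((p.piece_range _ _ _).trans (D.sub m))]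
          group
      have hx0 : p (D.t 0) = x := by rw [D.h0]; exact p.source
      have hy0 : p (D.t D.n) = y := by rw [D.h1 D.n le_rfl]; exact p.target
      have hfin := htel D.n
      rw [hx0, hy0] at hfin
      have hw0' : w0.toFun p hp = ((List.range D.n).map fun i =>
          w0.toFun (p.piece (D.t i) (D.t (i+1)) (D.mono (Nat.le_succ i)))
            (Set.subset_univ _)).prod := hw0
      have hw1' : w1.toFun p hp = ((List.range D.n).map fun i =>
          w1.toFun (p.piece (D.t i) (D.t (i+1)) (D.mono (Nat.le_succ i)))
            (Set.subset_univ _)).prod := hw1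
      rw [hw0', hw1', hfin]
end

section
/- Let X be path-connected, a ≠ b in X, p a path from b to a, and z ∈ Z¹(X,b;G). Then the cohomology class in H¹(X,{a,b};G) of the cocycle ε_p(z) • z, where ε_p(z) ∈ G_a is the 0-cochain equal to z(p) at a and 1 elsewhere, depends only on p and on the cohomology class of z in H¹(X,b;G). Consequently there is a well-defined map η_p : H¹(X,b;G) → H¹(X,{a,b};G) which is a section of the quotient map H¹(X,{a,b};G) → H¹(X,b;G). -/
open scoped Classical in
open NCocycle in
/-- Let X be path-connected, a ≠ b, p a path from b to a, and z a
1-cocycle of (X,b).  If w is a 1-cocycle of (X,{a,b}) whose underlying cochain is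
ε_p(z) • z (where ε_p(z) ∈ G_a is the 0-cochain equal to z(p) at a and 1 elsewhere),
then the class of w in H¹(X,{a,b};G) depends only on p and on the class of z in
H¹(X,b;G), and w maps to the class of z under the quotient map (so η_p is a
well-defined section of the quotient map H¹(X,{a,b};G) → H¹(X,b;G)). -/
theorem statement11 (X : Type) [TopologicalSpace X] [PathConnectedSpace X]
    (a b : X) (hab : a ≠ b) (G : Type) [Group G] (p : Path b a)
    (z z' : NCocycle (Set.univ : Set X) {b} G) (hzz' : Cohom z z')
    (w w' : NCocycle (Set.univ : Set X) {a, b} G)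
    (hw : ∀ (x y : X) (q : Path x y) (hq : Set.range q ⊆ Set.univ),
      w.toFun q hq
        = (if x = a then z.toFun p (Set.subset_univ _) else 1) * z.toFun q hq *
            ((if y = a then z.toFun p (Set.subset_univ _) else 1))⁻¹)
    (hw' : ∀ (x y : X) (q : Path x y) (hq : Set.range q ⊆ Set.univ),
      w'.toFun q hq
        = (if x = a then z'.toFun p (Set.subset_univ _) else 1) * z'.toFun q hq *
            ((if y = a then z'.toFun p (Set.subset_univ _) else 1))⁻¹) :
    Cohom w w' ∧
    Cohom (res subset_rfl (by simp : ({b} : Set X) ⊆ {a, b}) w) z := by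

  obtain ⟨c, hc, hcv⟩ := hzz'
  have hcb : c b = 1 := hc b rfl
  constructor
  · refine ⟨fun x => (if x = a then z'.toFun p (Set.subset_univ _) else 1) * c x *
      ((if x = a then z.toFun p (Set.subset_univ _) else 1))⁻¹, ?_, ?_⟩
    · intro y hy
      rcases hy with hy | hy
      · subst hy
        beta_reduce
        rw [if_pos rfl, if_pos rfl, hcv p (Set.subset_univ _), hcb]
        group
      · simp only [Set.mem_singleton_iff] at hy
        subst hy
        simp [if_neg hab.symm, hcb]
    · intro x y q hq
      rw [hw' x y q hq, hw x y q hq, hcv q hq]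
      group
  · refine ⟨fun x => ((if x = a then z.toFun p (Set.subset_univ _) else 1))⁻¹, ?_, ?_⟩
    · intro y hy
      simp only [Set.mem_singleton_iff] at hy
      subst hy
      simp [if_neg hab.symm]
    · intro x y q hq
      show z.toFun q _ = _ * w.toFun q _ * _
      rw [hw x y q hq]
      group
end
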